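/- arXiv:2105.01711 — 9 statements merged into one kernel-verified Lean document; each statement's English description precedes it below -/
import Mathlib

section
/- Let Σ be an alphabet and let L ⊆ Σ* be a language satisfying property (*): for all words w₁, w₂, w₃ ∈ Σ* and every letter a ∈ Σ, if w₁ a w₂ w₃ ∈ L then w₁ a w₂ a w₃ ∈ L. Then L is closed under precomposition with ordered surjections: if f : Fin n → Fin m is an ordered surjection and u : Fin m → Σ is a word (of length m) belonging to L, then the word u ∘ f : Fin n → Σ (of length n) also belongs to L. -/
/-- A surjection `f : Fin n → Fin m` is an *ordered surjection* if the minima of the fibers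
`f⁻¹(i)` are strictly increasing in `i`. -/
def IsOrderedSurjection {n m : ℕ} (f : Fin n → Fin m) : Prop :=
  Function.Surjective f ∧
    StrictMono fun i : Fin m => sInf {x : ℕ | ∃ h : x < n, f ⟨x, h⟩ = i}

/-!
Induct on `n`, peeling off the last position of `f` while carrying an arbitrary suffix to the
right of the word. If the last letter `f (n - 1)` already occurs earlier, the remaining positions
still form an ordered surjection and (*) copies that earlier letter to the end. Otherwise `n - 1`
is the minimum of its own fiber, so `f (n - 1)` is the largest letter `m - 1`; deleting it from
both `f` and `u` leaves an ordered surjection onto `Fin (m - 1)`, and the letter `u (m - 1)`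
joins the suffix.
-/

open Function Set

theorem List.ofFn_snoc {α : Type*} {n : ℕ} (f : Fin n → α) (a : α) :
    List.ofFn (Fin.snoc f a : Fin (n + 1) → α) = List.ofFn f ++ [a] := by
  rw [List.ofFn_succ']
  simp

theorem Nat.sInf_inter_Iio {S : Set ℕ} {k : ℕ} (h : (S ∩ Iio k).Nonempty) :
    sInf (S ∩ Iio k) = sInf S := by
  obtain ⟨t, htS, htk⟩ := h
  have hmem : sInf S ∈ S ∩ Iio k := ⟨Nat.sInf_mem ⟨t, htS⟩, (Nat.sInf_le htS).trans_lt htk⟩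
  exact le_antisymm (Nat.sInf_le hmem) (le_csInf ⟨_, hmem⟩ fun _ hb => Nat.sInf_le hb.1)

section FiberMin

variable {β : Type*}

/-- The first position at which `f` takes the value `i`, or `0` if there is none. -/
noncomputable def fiberMin {n : ℕ} (f : Fin n → β) (i : β) : ℕ :=
  sInf {x : ℕ | ∃ h : x < n, f ⟨x, h⟩ = i}

theorem isOrderedSurjection_iff {n m : ℕ} (f : Fin n → Fin m) :
    IsOrderedSurjection f ↔ Surjective f ∧ StrictMono (fiberMin f) :=
  Iff.rfl

theorem fiberMin_lt {n : ℕ} (f : Fin n → β) {i : β} (hi : i ∈ range f) : fiberMin f i < n := by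
  obtain ⟨q, rfl⟩ := hi
  have hq : fiberMin f (f q) ≤ q := Nat.sInf_le ⟨q.isLt, rfl⟩
  exact hq.trans_lt q.isLt

theorem fiberMin_comp_of_injective {γ : Type*} {n : ℕ} (f : Fin n → β) {e : β → γ}
    (he : Injective e) (i : β) : fiberMin (e ∘ f) (e i) = fiberMin f i := by
  simp only [fiberMin, comp_apply, he.eq_iff]

variable {k : ℕ} (g : Fin k → β)

theorem fiberMin_snoc_of_mem_range (a : β) {i : β} (hi : i ∈ range g) :
    fiberMin (Fin.snoc g a : Fin (k + 1) → β) i = fiberMin g i := by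
  have hfiber : {x : ℕ | ∃ h : x < k, g ⟨x, h⟩ = i} =
      {x : ℕ | ∃ h : x < k + 1, (Fin.snoc g a : Fin (k + 1) → β) ⟨x, h⟩ = i} ∩ Iio k := by
    ext x
    constructor
    · rintro ⟨hx, hgx⟩
      exact ⟨⟨by omega, (Fin.snoc_castSucc (α := fun _ => β) a g ⟨x, hx⟩).trans hgx⟩, hx⟩
    · rintro ⟨⟨_, hgx⟩, hx⟩
      exact ⟨hx, (Fin.snoc_castSucc (α := fun _ => β) a g ⟨x, hx⟩).symm.trans hgx⟩
  obtain ⟨q, rfl⟩ := hi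
  rw [fiberMin, fiberMin, hfiber, Nat.sInf_inter_Iio]
  exact hfiber ▸ ⟨q, q.isLt, rfl⟩

theorem fiberMin_snoc_of_not_mem_range {a : β} (ha : a ∉ range g) :
    fiberMin (Fin.snoc g a : Fin (k + 1) → β) a = k := by
  have hfiber : {x : ℕ | ∃ h : x < k + 1, (Fin.snoc g a : Fin (k + 1) → β) ⟨x, h⟩ = a} = {k} := by
    ext x
    constructor
    · rintro ⟨hx, hgx⟩
      by_contra hxk
      replace hxk : x < k := lt_of_le_of_ne (Nat.lt_succ_iff.1 hx) hxk
      exact ha ⟨⟨x, hxk⟩, (Fin.snoc_castSucc (α := fun _ => β) a g ⟨x, hxk⟩).symm.trans hgx⟩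
    · rintro (hx : x = k)
      rw [hx]
      exact ⟨Nat.lt_succ_self k, Fin.snoc_last (α := fun _ => β) a g⟩
  rw [fiberMin, hfiber, csInf_singleton]

end FiberMin

theorem mem_range_of_surjective_snoc {β : Type*} {k : ℕ} {g : Fin k → β} {a : β}
    (hf : Surjective (Fin.snoc g a : Fin (k + 1) → β)) {i : β} (hi : i ≠ a) : i ∈ range g := by
  have : i ∈ insert a (range g) := by rw [← Fin.range_snoc, hf.range_eq]; trivial
  exact this.resolve_left hi

namespace IsOrderedSurjection

variable {k m : ℕ}

theorem of_snoc_of_mem_range {g : Fin k → Fin m} {a : Fin m}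
    (hf : IsOrderedSurjection (Fin.snoc g a : Fin (k + 1) → Fin m)) (ha : a ∈ range g) :
    IsOrderedSurjection g := by
  rw [isOrderedSurjection_iff] at hf ⊢
  have hg : Surjective g := fun i => by
    obtain rfl | hi := eq_or_ne i a
    exacts [ha, mem_range_of_surjective_snoc hf.1 hi]
  have hmin : fiberMin (Fin.snoc g a : Fin (k + 1) → Fin m) = fiberMin g :=
    funext fun i => fiberMin_snoc_of_mem_range g a (hg i)
  exact ⟨hg, hmin ▸ hf.2⟩

theorem isTop_of_snoc_of_not_mem_range {g : Fin k → Fin m} {a : Fin m}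
    (hf : IsOrderedSurjection (Fin.snoc g a : Fin (k + 1) → Fin m)) (ha : a ∉ range g) :
    IsTop a := by
  rw [isOrderedSurjection_iff] at hf
  intro j
  by_contra! hj
  have hjg := mem_range_of_surjective_snoc hf.1 hj.ne'
  have hmin := hf.2 hj
  rw [fiberMin_snoc_of_not_mem_range g ha, fiberMin_snoc_of_mem_range g a hjg] at hmin
  exact (fiberMin_lt g hjg).not_gt hmin

theorem of_snoc_castSucc_last {g : Fin k → Fin m}
    (hf : IsOrderedSurjection
      (Fin.snoc (Fin.castSucc ∘ g) (Fin.last m) : Fin (k + 1) → Fin (m + 1))) :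
    IsOrderedSurjection g := by
  rw [isOrderedSurjection_iff] at hf ⊢
  have hrange (j : Fin m) : Fin.castSucc j ∈ range (Fin.castSucc ∘ g) :=
    mem_range_of_surjective_snoc hf.1 (Fin.castSucc_ne_last j)
  have hg : Surjective g := fun j => by
    obtain ⟨x, hx⟩ := hrange j
    exact ⟨x, Fin.castSucc_injective m hx⟩
  have hmin : fiberMin (Fin.snoc (Fin.castSucc ∘ g) (Fin.last m) : Fin (k + 1) → Fin (m + 1)) ∘
      Fin.castSucc = fiberMin g := funext fun j => by
    rw [comp_apply, fiberMin_snoc_of_mem_range _ _ (hrange j),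
      fiberMin_comp_of_injective g (Fin.castSucc_injective m)]
  exact ⟨hg, hmin ▸ hf.2.comp Fin.strictMono_castSucc⟩

end IsOrderedSurjection

/-- Property (*): a letter may be copied to any later position of a word of `L`. -/
def IsCopyClosed {A : Type*} (L : Set (List A)) : Prop :=
  ∀ (w₁ w₂ w₃ : List A) (a : A), w₁ ++ a :: (w₂ ++ w₃) ∈ L → w₁ ++ a :: (w₂ ++ a :: w₃) ∈ L

namespace IsCopyClosed

variable {A : Type*} {L : Set (List A)}

theorem append_getElem_cons_mem (hL : IsCopyClosed L) {l s : List A} (q : ℕ)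
    (hq : q < l.length) (h : l ++ s ∈ L) : l ++ l[q] :: s ∈ L := by
  have hsplit : l.take q ++ l[q] :: l.drop (q + 1) = l := by
    rw [List.getElem_cons_drop, List.take_append_drop]
  generalize l[q] = a at hsplit ⊢
  rw [← hsplit] at h ⊢
  simp only [List.append_assoc, List.cons_append] at h ⊢
  exact hL _ _ _ _ h

theorem append_mem_comp (hL : IsCopyClosed L) {k m : ℕ} (f : Fin k → Fin m)
    (hf : IsOrderedSurjection f) (u : Fin m → A) (s : List A) (hu : List.ofFn u ++ s ∈ L) :
    List.ofFn (u ∘ f) ++ s ∈ L := by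
  induction k generalizing m s with
  | zero =>
    obtain rfl : m = 0 := by
      by_contra hm
      exact (hf.1 ⟨0, by omega⟩).choose.elim0
    simpa using hu
  | succ k ih =>
    obtain ⟨g, a, rfl⟩ : ∃ g a, f = Fin.snoc g a := ⟨_, _, (Fin.snoc_init_self f).symm⟩
    rw [Fin.comp_snoc, List.ofFn_snoc]
    by_cases ha : a ∈ range g
    · obtain ⟨q, rfl⟩ := ha
      simpa using hL.append_getElem_cons_mem q (by simp)
        (ih g (hf.of_snoc_of_mem_range ⟨q, rfl⟩) u s hu)
    · cases m with
      | zero => exact a.elim0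
      | succ m =>
        obtain rfl : a = Fin.last m :=
          (hf.isTop_of_snoc_of_not_mem_range ha).eq_top ▸ Fin.top_eq_last m
        obtain ⟨g', rfl⟩ : ∃ g', g = Fin.castSucc ∘ g' :=
          ⟨fun x => (g x).castPred fun h => ha ⟨x, h⟩,
            funext fun x => (Fin.castSucc_castPred _ _).symm⟩
        rw [List.ofFn_succ', List.concat_eq_append, List.append_assoc] at hu
        rw [List.append_assoc]
        exact ih g' hf.of_snoc_castSucc_last (u ∘ Fin.castSucc) (u (Fin.last m) :: s) hu

end IsCopyClosed

/-- If a language `L` satisfies property (*) — whenever `w₁ a w₂ w₃ ∈ L`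
then `w₁ a w₂ a w₃ ∈ L` — then `L` is closed under precomposition with ordered surjections:
if `f : Fin n → Fin m` is an ordered surjection and the word `u : Fin m → A` lies in `L`,
then so does the word `u ∘ f : Fin n → A`. -/
theorem mem_of_orderedSurjection_comp {A : Type*} (L : Set (List A))
    (hL : ∀ (w₁ w₂ w₃ : List A) (a : A),
      w₁ ++ a :: (w₂ ++ w₃) ∈ L → w₁ ++ a :: (w₂ ++ a :: w₃) ∈ L)
    {n m : ℕ} (f : Fin n → Fin m) (hf : IsOrderedSurjection f)
    (u : Fin m → A) (hu : List.ofFn u ∈ L) :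
    List.ofFn (u ∘ f) ∈ L := by
  simpa only [List.append_nil] using
    IsCopyClosed.append_mem_comp hL f hf u [] (by rwa [List.append_nil])
end

section
/- Let Σ be an alphabet, let L ⊆ Σ* be a language satisfying property (*): for all words w₁, w₂, w₃ ∈ Σ* and every letter a ∈ Σ, if w₁ a w₂ w₃ ∈ L then w₁ a w₂ a w₃ ∈ L. Let w : Fin n → Σ be a word of length n. Then the set I(w, L) := { s : s is an equivalence relation on Fin n, s ≤ ker(w), and the quotient word w_s belongs to L } is downward closed in the lattice of equivalence relations on Fin n: if s ∈ I(w, L) and t ≤ s, then t ∈ I(w, L). (Equivalently, I(w, L) is an upward-closed ideal of the partition lattice in the paper's convention, where the discrete partition is the top element.) -/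
open scoped Classical

/-- The quotient word `w_s` of a word `w : Fin n → A` by an equivalence relation `s`
(meaningful when `s ≤ Setoid.ker w`): the list of minimal representatives of the classes
of `s`, in increasing order, mapped through `w`. -/
noncomputable def quotientWord {A : Type*} {n : ℕ} (s : Setoid (Fin n)) (w : Fin n → A) :
    List A :=
  ((Finset.univ.filter fun i : Fin n => ∀ j, s.r i j → i ≤ j).sort (· ≤ ·)).map w

/-!
Refining `s` to `t` only adds minimal representatives, and each new one `x` lies in the
`s`-class of an older representative `y < x`, which carries the same letter. So `w_t` arises
from `w_s` by inserting, position by position, a copy of a letter that already occurs further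
left, and each such insertion is an instance of property (*).
-/

theorem Finset.sort_insert_of_forall_lt {α : Type*} [LinearOrder α] {s : Finset α} {a : α}
    (h : ∀ b ∈ s, b < a) : (insert a s).sort (· ≤ ·) = s.sort (· ≤ ·) ++ [a] := by
  have ha : a ∉ s := fun ha => lt_irrefl a (h a ha)
  refine List.Perm.eq_of_pairwise' (pairwise_sort _ _) ?_ ?_
  · exact List.pairwise_append.2 ⟨pairwise_sort _ _, by simp,
      fun b hb c hc => by simp_all [le_of_lt]⟩
  · rw [List.perm_ext_iff_of_nodup (sort_nodup _ _)
      (List.nodup_append.2 ⟨sort_nodup _ _, by simp, by simp_all⟩)]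
    simp [or_comm]

section Duplication

variable {A : Type*} {L : Set (List A)}
  (hL : ∀ (w₁ w₂ w₃ : List A) (a : A),
    w₁ ++ a :: (w₂ ++ w₃) ∈ L → w₁ ++ a :: (w₂ ++ a :: w₃) ∈ L)
include hL

theorem append_cons_mem_of_mem {p r : List A} {a : A} (ha : a ∈ p) (h : p ++ r ∈ L) :
    p ++ a :: r ∈ L := by
  obtain ⟨p₁, p₂, rfl⟩ := List.append_of_mem ha
  simpa using hL p₁ p₂ r a (by simpa using h)

/-- The suffix `r` lets the induction peel off the largest position of `T`. -/
theorem map_sort_append_mem_of_subset {α : Type*} [LinearOrder α] (f : α → A)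
    {S T : Finset α} (hST : S ⊆ T) (hrep : ∀ x ∈ T, ∃ y ∈ S, y ≤ x ∧ f y = f x)
    {r : List A} (h : (S.sort (· ≤ ·)).map f ++ r ∈ L) :
    (T.sort (· ≤ ·)).map f ++ r ∈ L := by
  induction T using Finset.induction_on_max generalizing S r with
  | empty => rwa [Finset.subset_empty.1 hST] at h
  | insert x T hlt ih =>
    rw [Finset.sort_insert_of_forall_lt hlt, List.map_append, List.append_assoc]
    by_cases hxS : x ∈ S
    · have hST' : S.erase x ⊆ T := Finset.subset_insert_iff.1 hST
      refine ih hST' ?_ ?_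
      · intro z hz
        obtain ⟨y, hyS, hyz, hfy⟩ := hrep z (Finset.mem_insert_of_mem hz)
        exact ⟨y, Finset.mem_erase.2 ⟨(hyz.trans_lt (hlt z hz)).ne, hyS⟩, hyz, hfy⟩
      · rwa [← Finset.insert_erase hxS,
          Finset.sort_insert_of_forall_lt fun b hb => hlt b (hST' hb), List.map_append,
          List.append_assoc] at h
    · have hST' : S ⊆ T := (Finset.subset_insert_iff_of_notMem hxS).1 hST
      obtain ⟨y, hyS, -, hfy⟩ := hrep x (Finset.mem_insert_self x T)
      have hfx : f x ∈ (T.sort (· ≤ ·)).map f :=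
        hfy ▸ List.mem_map_of_mem ((Finset.mem_sort _).2 (hST' hyS))
      exact append_cons_mem_of_mem hL hfx
        (ih hST' (fun z hz => hrep z (Finset.mem_insert_of_mem hz)) h)

end Duplication

section MinReps

variable {α : Type*} [LinearOrder α] [Fintype α]

noncomputable def minReps (s : Setoid α) : Finset α :=
  Finset.univ.filter fun i => ∀ j, s.r i j → i ≤ j

theorem minReps_anti {s t : Setoid α} (hts : t ≤ s) : minReps s ⊆ minReps t := by
  intro i hi
  simp only [minReps, Finset.mem_filter, Finset.mem_univ, true_and] at hi ⊢
  exact fun j hj => hi j (hts hj)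

theorem exists_mem_minReps_le (s : Setoid α) (x : α) :
    ∃ y ∈ minReps s, y ≤ x ∧ s.r y x := by
  obtain ⟨y, hy, hmin⟩ :=
    (Finset.univ.filter (s.r · x)).exists_min_image id ⟨x, by simp⟩
  simp only [Finset.mem_filter, Finset.mem_univ, true_and, id] at hy hmin
  refine ⟨y, ?_, hmin x (s.refl' x), hy⟩
  simp only [minReps, Finset.mem_filter, Finset.mem_univ, true_and]
  exact fun j hj => hmin j (s.trans' (s.symm' hj) hy)

end MinReps

theorem quotientWord_eq_map_sort_minReps {A : Type*} {n : ℕ} (s : Setoid (Fin n))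
    (w : Fin n → A) : quotientWord s w = ((minReps s).sort (· ≤ ·)).map w := by
  unfold quotientWord minReps
  -- not `rfl`: the two filters are decided by different instances
  congr

/-- If `L` satisfies property (*), then for any word `w : Fin n → A`
the set `I(w, L) = {s | s ≤ ker w and w_s ∈ L}` is downward closed in the lattice of
equivalence relations on `Fin n` (ordered by refinement, discrete partition at the bottom);
equivalently it is an upward-closed ideal of the partition lattice in the paper's
convention. -/
theorem quotientWord_ideal_downward_closed {A : Type*} {n : ℕ} (L : Set (List A))
    (hL : ∀ (w₁ w₂ w₃ : List A) (a : A),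
      w₁ ++ a :: (w₂ ++ w₃) ∈ L → w₁ ++ a :: (w₂ ++ a :: w₃) ∈ L)
    (w : Fin n → A) (s t : Setoid (Fin n)) (hts : t ≤ s)
    (hs : s ≤ Setoid.ker w) (hsL : quotientWord s w ∈ L) :
    t ≤ Setoid.ker w ∧ quotientWord t w ∈ L := by
  refine ⟨hts.trans hs, ?_⟩
  have hrep : ∀ x ∈ minReps t, ∃ y ∈ minReps s, y ≤ x ∧ w y = w x := fun x _ => by
    obtain ⟨y, hy, hyx, hsyx⟩ := exists_mem_minReps_le s x
    exact ⟨y, hy, hyx, hs hsyx⟩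
  rw [quotientWord_eq_map_sort_minReps] at hsL ⊢
  simpa using map_sort_append_mem_of_subset hL w (minReps_anti hts) hrep (r := [])
    (by simpa using hsL)
end

section
/- Let f : Fin n → Y be a surjection onto a type Y (necessarily finite). Then: (i) the map y ↦ min f⁻¹(y) is injective; (ii) there is a unique linear order on Y such that for all y, y' ∈ Y, y ≤ y' holds if and only if min f⁻¹(y) ≤ min f⁻¹(y') in Fin n; and (iii) this construction is compatible with composition: if g : Y → Z is a further surjection, then the linear order induced on Z by the surjection g ∘ f : Fin n → Z coincides with the linear order induced on Z by the surjection g from the linearly ordered set (Y, ≤) constructed in (ii). -/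
open scoped Classical

/- The fiber minima form a section `fibMin f` of `f`, hence an injection `Y → X`, and the induced
order on `Y` is the pullback of the order of `X` along it; a relation pinned down by an `↔` is
unique. For compatibility, let `y` have the least fiber minimum in `g⁻¹(z)`. Then `min f⁻¹(y)` lies
in `(g ∘ f)⁻¹(z)`, and conversely `min (g ∘ f)⁻¹(z)` lies in `f⁻¹(y')` for some `y' ∈ g⁻¹(z)`, so it
is at least `min f⁻¹(y') ≥ min f⁻¹(y)`; hence `min (g ∘ f)⁻¹(z) = min f⁻¹(y)`. -/

/-- The minimum of the fiber `f⁻¹(y)` of a surjection `f` from a finite linearly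
ordered type. -/
noncomputable def fibMin {X Y : Type*} [LinearOrder X] [Fintype X]
    (f : X → Y) (hf : Function.Surjective f) (y : Y) : X :=
  (Finset.univ.filter fun x => f x = y).min' (by
    obtain ⟨x, hx⟩ := hf y
    exact ⟨x, by simp [hx]⟩)

theorem existsUnique_isLinearOrder_iff_le_comp {Y X : Type*} [LinearOrder X] {e : Y → X}
    (he : Function.Injective e) :
    ∃! le : Y → Y → Prop, IsLinearOrder Y le ∧ ∀ y y', le y y' ↔ e y ≤ e y' := by
  refine ⟨e ⁻¹'o (· ≤ ·), ⟨(RelEmbedding.preimage ⟨e, he⟩ (· ≤ ·)).isLinearOrder,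
    fun _ _ => Iff.rfl⟩, ?_⟩
  rintro le ⟨-, hle⟩
  funext y y'
  exact propext (hle y y')

section FibMin

variable {X Y Z : Type*} [LinearOrder X] [Fintype X] {f : X → Y} (hf : Function.Surjective f)

theorem apply_fibMin (y : Y) : f (fibMin f hf y) = y := by
  unfold fibMin
  exact (Finset.mem_filter.mp (Finset.min'_mem (Finset.univ.filter fun x => f x = y) _)).2

theorem fibMin_le {y : Y} {x : X} (hx : f x = y) : fibMin f hf y ≤ x :=
  Finset.min'_le _ _ (by simp [hx])

theorem fibMin_injective : Function.Injective (fibMin f hf) :=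
  Function.LeftInverse.injective (apply_fibMin hf)

theorem fibMin_comp_eq {g : Y → Z} (hg : Function.Surjective g) {z : Z} {y : Y} (hy : g y = z)
    (hmin : ∀ y₂, g y₂ = z → fibMin f hf y ≤ fibMin f hf y₂) :
    fibMin (g ∘ f) (hg.comp hf) z = fibMin f hf y := by
  set x₀ := fibMin (g ∘ f) (hg.comp hf) z
  have hx₀ : g (f x₀) = z := apply_fibMin (hg.comp hf) z
  refine le_antisymm (fibMin_le _ (by simp [apply_fibMin hf y, hy])) ?_
  calc fibMin f hf y ≤ fibMin f hf (f x₀) := hmin _ hx₀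
    _ ≤ x₀ := fibMin_le hf rfl

end FibMin

/-- For a surjection `f : Fin n → Y`: (i) `y ↦ min f⁻¹(y)` is injective;
(ii) there is a unique linear order on `Y` with `y ≤ y' ↔ min f⁻¹(y) ≤ min f⁻¹(y')`; and
(iii) for a further surjection `g : Y → Z`, the order induced on `Z` by `g ∘ f` coincides
with the order induced on `Z` by `g` from the linearly ordered set `(Y, ≤)` of (ii):
if `y` (resp. `y'`) is the `≤`-minimum of `g⁻¹(z)` (resp. `g⁻¹(z')`), then
`z ≤ z'` in the `g ∘ f`-order iff `y ≤ y'`. -/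
theorem orderedSurjection_order_unique_and_compatible {n : ℕ} {Y Z : Type*}
    (f : Fin n → Y) (hf : Function.Surjective f)
    (g : Y → Z) (hg : Function.Surjective g) :
    Function.Injective (fibMin f hf) ∧
    (∃! le : Y → Y → Prop, IsLinearOrder Y le ∧
      ∀ y y', le y y' ↔ fibMin f hf y ≤ fibMin f hf y') ∧
    (∀ (z z' : Z) (y y' : Y), g y = z → g y' = z' →
      (∀ y₂, g y₂ = z → fibMin f hf y ≤ fibMin f hf y₂) →
      (∀ y₂, g y₂ = z' → fibMin f hf y' ≤ fibMin f hf y₂) →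
      (fibMin (g ∘ f) (hg.comp hf) z ≤ fibMin (g ∘ f) (hg.comp hf) z' ↔
        fibMin f hf y ≤ fibMin f hf y')) := by
  refine ⟨fibMin_injective hf, existsUnique_isLinearOrder_iff_le_comp (fibMin_injective hf), ?_⟩
  intro z z' y y' hy hy' hmin hmin'
  rw [fibMin_comp_eq hf hg hy hmin, fibMin_comp_eq hf hg hy' hmin']
end

section
/- Let j, r be natural numbers and let D denote the formal derivative on the formal power series ring ℚ[[u]]. Then the kernel in ℚ[[u]] of the operator ∏_{a=0}^{j−1} (D − a·id)^r (equivalently, of the operator binom(D, j)^r, which is a nonzero scalar multiple of it) is exactly the ℚ-linear span of the power series u^d · exp(a·u) for natural numbers d < r and a < j, where exp(a·u) denotes the formal exponential series ∑_{k≥0} a^k u^k / k!. -/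
/-!
For distinct `a` the polynomials `(X - a) ^ r` are pairwise coprime, so the kernel of their
product evaluated at `D` is the sum of the kernels of the factors. Since
`D (exp (a u)) = a exp (a u)`, multiplication by the unit `exp (a u)` intertwines `D` with `D - a`,
so `ker (D - a) ^ r = exp (a u) · ker D ^ r`, and `ker D ^ r` consists of the polynomials of
degree `< r`.
-/

/-- The formal derivative on `ℚ⟦u⟧`, as a `ℚ`-linear endomorphism. -/
noncomputable def Dop : Module.End ℚ (PowerSeries ℚ) :=
  (PowerSeries.derivative ℚ).toLinearMap

open Function Polynomial

theorem Polynomial.ker_aeval_prod_of_pairwise_isCoprime {R M ι : Type*} [CommRing R]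
    [AddCommGroup M] [Module R M] (f : Module.End R M) {s : Finset ι} {p : ι → R[X]}
    (hp : (s : Set ι).Pairwise (IsCoprime on p)) :
    LinearMap.ker (aeval f (∏ i ∈ s, p i)) = ⨆ i ∈ s, LinearMap.ker (aeval f (p i)) := by
  classical
  induction s using Finset.induction_on with
  | empty => simp [Module.End.one_eq_id]
  | insert i s hi ih =>
    have hcop : IsCoprime (p i) (∏ k ∈ s, p k) := IsCoprime.prod_right fun k hk =>
      hp (by simp) (by simp [hk]) (ne_of_mem_of_not_mem hk hi).symm
    rw [Finset.prod_insert hi, ← sup_ker_aeval_eq_ker_aeval_mul_of_coprime f hcop,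
      ih (hp.mono (by simp)), Finset.iSup_insert]

theorem Module.End.ker_list_prod_pow_sub_smul_one {K M : Type*} [Field K] [AddCommGroup M]
    [Module K M] (f : Module.End K M) {l : List K} (hl : l.Nodup) (r : ℕ) :
    LinearMap.ker ((l.map fun a => (f - a • 1) ^ r).prod) =
      ⨆ a ∈ l, LinearMap.ker ((f - a • 1) ^ r) := by
  classical
  have haeval (a : K) : aeval f ((X - C a) ^ r) = (f - a • 1) ^ r := by
    rw [map_pow, map_sub, aeval_X, aeval_C, Algebra.algebraMap_eq_smul_one]
  have hcop : (l.toFinset : Set K).Pairwise (IsCoprime on fun a => (X - C a) ^ r) :=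
    fun a _ b _ hab => ((pairwise_coprime_X_sub_C injective_id) hab).pow
  have hprod : (l.map fun a => aeval f ((X - C a) ^ r)).prod =
      aeval f (∏ a ∈ l.toFinset, (X - C a) ^ r) := by
    rw [List.prod_toFinset _ hl, map_list_prod, List.map_map]
    rfl
  simp_rw [← haeval, hprod, ker_aeval_prod_of_pairwise_isCoprime f hcop, List.mem_toFinset]

theorem Derivation.pow_sub_smul_one_apply_mul {R A : Type*} [CommRing R] [CommRing A]
    [Algebra R A] (δ : Derivation R A A) {a : R} {e : A} (he : δ e = a • e) (r : ℕ) (g : A) :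
    (((δ : Module.End R A) - a • 1) ^ r) (e * g) = e * ((δ : Module.End R A) ^ r) g := by
  induction r with
  | zero => simp
  | succ r ih =>
    rw [pow_succ', pow_succ', Module.End.mul_apply, Module.End.mul_apply, ih]
    simp only [LinearMap.sub_apply, LinearMap.smul_apply, Module.End.one_apply,
      Derivation.coeFn_coe, Derivation.leibniz, he]
    simp only [smul_eq_mul, Algebra.smul_def]
    ring

theorem Derivation.ker_pow_sub_smul_one {R A : Type*} [CommRing R] [CommRing A]
    [Algebra R A] (δ : Derivation R A A) {a : R} {e : A} (he : δ e = a • e) (hu : IsUnit e)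
    (r : ℕ) :
    LinearMap.ker (((δ : Module.End R A) - a • 1) ^ r) =
      (LinearMap.ker ((δ : Module.End R A) ^ r)).map (LinearMap.mulLeft R e) := by
  ext f
  constructor
  · intro hf
    have hf' : e * (↑hu.unit⁻¹ * f) = f := by rw [← mul_assoc, hu.mul_val_inv, one_mul]
    refine ⟨↑hu.unit⁻¹ * f, ?_, hf'⟩
    rwa [SetLike.mem_coe, LinearMap.mem_ker, ← hu.mul_right_eq_zero,
      ← δ.pow_sub_smul_one_apply_mul he, hf']
  · rintro ⟨g, hg, rfl⟩
    rw [SetLike.mem_coe, LinearMap.mem_ker] at hg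
    rw [LinearMap.mem_ker, LinearMap.mulLeft_apply, δ.pow_sub_smul_one_apply_mul he, hg, mul_zero]

namespace PowerSeries

theorem derivative_rescale {R : Type*} [CommRing R] (a : R) (f : R⟦X⟧) :
    d⁄dX R (rescale a f) = a • rescale a (d⁄dX R f) := by
  ext n
  simp only [coeff_derivative, coeff_rescale, coeff_smul, smul_eq_mul, pow_succ]
  ring

theorem derivative_rescale_exp {A : Type*} [CommRing A] [Algebra ℚ A] (a : A) :
    d⁄dX A (rescale a (exp A)) = a • rescale a (exp A) := by
  rw [derivative_rescale, derivative_exp]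

theorem ker_derivative_pow {K : Type*} [Field K] [CharZero K] (r : ℕ) :
    LinearMap.ker ((d⁄dX K : Module.End K K⟦X⟧) ^ r) =
      Submodule.span K ((X ^ ·) '' Set.Iio r) := by
  have hmem (f : K⟦X⟧) : f ∈ LinearMap.ker ((d⁄dX K : Module.End K K⟦X⟧) ^ r) ↔
      ∀ n, r ≤ n → coeff n f = 0 := by
    simp only [LinearMap.mem_ker, Module.End.pow_apply, Derivation.coeFn_coe, PowerSeries.ext_iff,
      coeff_iterate_derivative, map_zero, mul_eq_zero, Nat.cast_eq_zero,
      (Nat.ascFactorial_pos _ _).ne', false_or]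
    exact ⟨fun h n hn => by simpa [Nat.sub_add_cancel hn] using h (n - r),
      fun h n => h _ (Nat.le_add_left r n)⟩
  apply le_antisymm
  · intro f hf
    have hsum : f = ∑ d ∈ Finset.range r, coeff d f • X ^ d := by
      ext n
      simp only [map_sum, coeff_smul, coeff_X_pow, smul_eq_mul, mul_ite, mul_one, mul_zero,
        Finset.sum_ite_eq, Finset.mem_range]
      split_ifs with hn
      · rfl
      · exact (hmem f).1 hf n (not_lt.1 hn)
    rw [hsum]
    exact Submodule.sum_mem _ fun d hd =>
      Submodule.smul_mem _ _ (Submodule.subset_span ⟨d, Finset.mem_range.1 hd, rfl⟩)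
  · rw [Submodule.span_le]
    rintro _ ⟨d, hd, rfl⟩
    exact (hmem _).2 fun n hn => by rw [coeff_X_pow, if_neg ((Set.mem_Iio.1 hd).trans_le hn).ne']

theorem ker_derivative_sub_smul_one_pow {K : Type*} [Field K] [CharZero K] (a : K) (r : ℕ) :
    LinearMap.ker (((d⁄dX K : Module.End K K⟦X⟧) - a • 1) ^ r) =
      Submodule.span K ((fun d => X ^ d * rescale a (exp K)) '' Set.Iio r) := by
  rw [(d⁄dX K).ker_pow_sub_smul_one (derivative_rescale_exp a) ((isUnit_exp K).map (rescale a)),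
    ker_derivative_pow, Submodule.map_span, Set.image_image]
  simp_rw [LinearMap.mulLeft_apply, mul_comm]

end PowerSeries

/-- The kernel in `ℚ⟦u⟧` of the operator `∏_{a=0}^{j-1} (D - a·id)^r`
(a nonzero scalar multiple of `binom(D, j)^r`) is exactly the `ℚ`-span of the power series
`u^d · exp(a·u)` for `d < r` and `a < j`. -/
theorem ker_binom_pow_derivative (j r : ℕ) :
    LinearMap.ker
        (((List.range j).map
            (fun a => (Dop - (a : ℚ) • (1 : Module.End ℚ (PowerSeries ℚ))) ^ r)).prod) =
      Submodule.span ℚ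
        {f : PowerSeries ℚ | ∃ d < r, ∃ a < j,
          f = PowerSeries.X ^ d * PowerSeries.rescale (a : ℚ) (PowerSeries.exp ℚ)} := by
  -- the cast `(a : ℚ)` in the statement lifts `List.range j` to `List ℚ` through the list monad
  have hcast : (do let a ← List.range j; pure (a : ℚ)) = (List.range j).map Nat.cast :=
    List.flatMap_pure_eq_map _ _
  rw [hcast, Dop.ker_list_prod_pow_sub_smul_one (List.nodup_range.map Nat.cast_injective)]
  simp_rw [Dop, PowerSeries.ker_derivative_sub_smul_one_pow, ← Submodule.span_iUnion₂]
  congr 1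
  ext f
  simp only [List.mem_map, List.mem_range, Set.mem_iUnion, Set.mem_image, Set.mem_Iio,
    exists_prop, Set.mem_ofPred_eq]
  constructor
  · rintro ⟨_, ⟨a, ha, rfl⟩, d, hd, rfl⟩
    exact ⟨d, hd, a, ha, rfl⟩
  · rintro ⟨d, hd, a, ha, rfl⟩
    exact ⟨a, ⟨a, ha, rfl⟩, d, hd, rfl⟩
end

section
/- Fix r ≥ 1 and k ≥ 1 with |A| ≤ k. Let E_{>k} ⊆ Λ be the ideal generated by { e_m : m > k }, let U ⊆ Λ be the ideal generated by { uₙ : n ≥ 1 }, and let ι_k : ℚ[x₁, …, x_k] → Λ/E_{>k} be the ℚ-algebra homomorphism sending x_i to the class of p_i. Then the preimage under ι_k of the image of U^r in Λ/E_{>k} is exactly the ideal (x₁ − s₁, …, x_k − s_k)^r of ℚ[x₁, …, x_k], where s_i := ∑_{d | i} d·a_d. -/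
noncomputable section

/-- The ring of symmetric functions, modelled as the polynomial ring `ℚ[p₁, p₂, …]`
in countably many variables indexed by positive integers (the power sums). -/
abbrev SymmFn : Type := MvPolynomial ℕ+ ℚ

/-- The power sum `pₙ` (for `n ≥ 1`; junk value `0` for `n = 0`). -/
def pSym (n : ℕ) : SymmFn :=
  if h : 0 < n then MvPolynomial.X (⟨n, h⟩ : ℕ+) else 0

/-- The elementary symmetric functions, defined by `e₀ = 1` and Newton's recursion
`n·eₙ = ∑_{i=1}^{n} (−1)^{i−1} pᵢ e_{n−i}`. -/
def eSym : ℕ → SymmFn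
  | 0 => 1
  | n + 1 =>
      ((n + 1 : ℚ))⁻¹ •
        ∑ j ∈ Finset.range (n + 1), ((-1 : ℚ) ^ j) • (pSym (j + 1) * eSym (n - j))
  termination_by n => n
  decreasing_by exact Nat.lt_succ_of_le (Nat.sub_le _ _)

/-- `∑_{d | n} d·a_d` as a rational number. -/
def divSum (a : ℕ →₀ ℕ) (n : ℕ) : ℚ :=
  ((∑ d ∈ n.divisors, d * a d : ℕ) : ℚ)

/-- `uₙ = pₙ − ∑_{d | n} d·a_d`. -/
def uSym (a : ℕ →₀ ℕ) (n : ℕ) : SymmFn :=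
  pSym n - MvPolynomial.C (divSum a n)

/-- The ideal `E_{>k}` of `Λ` generated by the `e_m` with `m > k`. -/
def Egt (k : ℕ) : Ideal SymmFn :=
  Ideal.span {x : SymmFn | ∃ m : ℕ, k < m ∧ x = eSym m}

/-- The ideal `U` of `Λ` generated by the `uₙ`, `n ≥ 1`. -/
def Uideal (a : ℕ →₀ ℕ) : Ideal SymmFn :=
  Ideal.span {x : SymmFn | ∃ n : ℕ, 0 < n ∧ x = uSym a n}

/-- The `ℚ`-algebra homomorphism `ι_k : ℚ[x₁, …, x_k] → Λ/E_{>k}` sending `x_i` to the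
class of the power sum `p_i`. -/
def iotaK (k : ℕ) : MvPolynomial (Fin k) ℚ →ₐ[ℚ] SymmFn ⧸ Egt k :=
  MvPolynomial.aeval fun i : Fin k => Ideal.Quotient.mk (Egt k) (pSym ((i : ℕ) + 1))

/-!
By Newton's identities, imposing `e_n = 0` for `n > k` determines every `p_n` from
`p₁, …, p_k`, and this makes `ι_k` an isomorphism `ℚ[x₁, …, x_k] ≃ Λ/E_{>k}`. The ideal `U` is
the kernel of the specialization `p_n ↦ s_n`, which sends `∑ e_n tⁿ` to the polynomial
`∏_d (1 - (-t)^d)^{a_d}` of degree `|A| ≤ k`; so it kills `E_{>k}`, the image of `U` is the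
kernel of the induced map on `Λ/E_{>k}`, and its pull-back along `ι_k` is the maximal ideal
`(x_i - s_i)` of the point `s`. Being an isomorphism, `ι_k` commutes with `r`-th powers.
-/

open Finset

theorem Ideal.comap_pow_of_bijective {R S F : Type*} [CommRing R] [CommRing S] [FunLike F R S]
    [RingHomClass F R S] (f : F) (hf : Function.Bijective f) (J : Ideal S) (r : ℕ) :
    Ideal.comap f (J ^ r) = Ideal.comap f J ^ r := by
  conv_lhs => rw [← Ideal.map_comap_of_surjective f hf.2 J, ← Ideal.map_pow]
  exact Ideal.comap_map_of_bijective f hf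

open MvPolynomial in
theorem MvPolynomial.ker_aeval_eq_span {σ R : Type*} [CommRing R] (x : σ → R) :
    RingHom.ker (aeval x : MvPolynomial σ R →ₐ[R] R) =
      Ideal.span {g | ∃ i, g = X i - C (x i)} := by
  set J := Ideal.span {g : MvPolynomial σ R | ∃ i, g = X i - C (x i)}
  refine le_antisymm (fun g hg => ?_) (Ideal.span_le.2 ?_)
  · have hmk : Ideal.Quotient.mkₐ R J = (Algebra.ofId R _).comp (aeval x) := by
      refine algHom_ext fun i => ?_
      rw [AlgHom.comp_apply, aeval_X, Algebra.ofId_apply, Ideal.Quotient.mkₐ_eq_mk,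
        IsScalarTower.algebraMap_apply R (MvPolynomial σ R), Ideal.Quotient.algebraMap_eq,
        algebraMap_eq, Ideal.Quotient.mk_eq_mk_iff_sub_mem]
      exact Ideal.subset_span ⟨i, rfl⟩
    rw [← Ideal.Quotient.eq_zero_iff_mem, ← Ideal.Quotient.mkₐ_eq_mk R, hmk, AlgHom.comp_apply,
      RingHom.mem_ker.1 hg, map_zero]
  · rintro _ ⟨i, rfl⟩
    simp

section Newton

variable {R S : Type*} [CommRing R] [Algebra ℚ R] [CommRing S] [Algebra ℚ S]

/-- `p` and `e` are the power sums and the elementary symmetric functions of one virtual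
alphabet (`p 0` is ignored). -/
def IsNewtonPair (p e : ℕ → R) : Prop :=
  e 0 = 1 ∧ ∀ n : ℕ, ((n : ℚ) + 1) • e (n + 1) =
    ∑ j ∈ range (n + 1), (-1 : ℚ) ^ j • (p (j + 1) * e (n - j))

theorem isNewtonPair_pSym_eSym : IsNewtonPair pSym eSym := by
  refine ⟨by rw [eSym], fun n => ?_⟩
  rw [eSym, smul_smul, mul_inv_cancel₀ (by positivity), one_smul]

namespace IsNewtonPair

variable {p p' e e' : ℕ → R}

theorem map (h : IsNewtonPair p e) (f : R →ₐ[ℚ] S) :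
    IsNewtonPair (fun n => f (p n)) (fun n => f (e n)) := by
  refine ⟨show f (e 0) = 1 by rw [h.1, map_one], fun n => ?_⟩
  simp only [← map_mul, ← map_smul, ← map_sum, h.2]

theorem e_eq_of_p_eq (h : IsNewtonPair p e) (h' : IsNewtonPair p' e') {N : ℕ}
    (hp : ∀ m, 0 < m → m ≤ N → p m = p' m) : ∀ n ≤ N, e n = e' n := by
  intro n
  induction n using Nat.strong_induction_on with
  | _ n ih =>
    intro hn
    rcases n with _ | n
    · rw [h.1, h'.1]
    · refine smul_right_injective R (r := ((n : ℚ) + 1)) (by positivity) ?_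
      simp only [h.2, h'.2]
      refine sum_congr rfl fun j hj => ?_
      rw [mem_range] at hj
      rw [hp (j + 1) j.succ_pos (by omega), ih (n - j) (by omega) (by omega)]

theorem p_succ (h : IsNewtonPair p e) (n : ℕ) :
    p (n + 1) = (-1 : ℚ) ^ n • (((n : ℚ) + 1) • e (n + 1) -
      ∑ j ∈ range n, (-1 : ℚ) ^ j • (p (j + 1) * e (n - j))) := by
  rw [h.2, sum_range_succ, Nat.sub_self, h.1, mul_one, add_sub_cancel_left, smul_smul,
    ← mul_pow, neg_one_mul, neg_neg, one_pow, one_smul]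

theorem p_eq_of_e_eq (h : IsNewtonPair p e) (h' : IsNewtonPair p' e') {N : ℕ}
    (he : ∀ m ≤ N, e m = e' m) : ∀ n, 0 < n → n ≤ N → p n = p' n := by
  intro n
  induction n using Nat.strong_induction_on with
  | _ n ih =>
    intro hn hnN
    obtain ⟨n, rfl⟩ := Nat.exists_eq_add_of_lt hn
    rw [zero_add] at hnN ⊢
    rw [h.p_succ, h'.p_succ, he (n + 1) hnN]
    congr 2
    refine sum_congr rfl fun j hj => ?_
    rw [mem_range] at hj
    rw [ih (j + 1) (by omega) j.succ_pos (by omega), he (n - j) (by omega)]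

end IsNewtonPair

/-- `p (n + 1)` solved from Newton's identity for `e (n + 1)`. -/
def newtonPowerSums (e : ℕ → R) : ℕ → R
  | 0 => 0
  | n + 1 => (-1 : ℚ) ^ n • (((n : ℚ) + 1) • e (n + 1) -
      ∑ j : Fin n, (-1 : ℚ) ^ (j : ℕ) • (newtonPowerSums e (j + 1) * e (n - (j : ℕ))))

theorem newtonPowerSums_zero (e : ℕ → R) : newtonPowerSums e 0 = 0 := by
  rw [newtonPowerSums]

theorem isNewtonPair_newtonPowerSums {e : ℕ → R} (h0 : e 0 = 1) :
    IsNewtonPair (newtonPowerSums e) e := by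
  refine ⟨h0, fun n => ?_⟩
  rw [sum_range_succ, Nat.sub_self, h0, mul_one, newtonPowerSums,
    ← Fin.sum_univ_eq_sum_range (fun j => (-1 : ℚ) ^ j • (newtonPowerSums e (j + 1) * e (n - j))),
    smul_smul, ← mul_pow, neg_one_mul, neg_neg, one_pow, one_smul, add_sub_cancel]

end Newton

section PowerSumSpecialization
open MvPolynomial

variable {R : Type*} [CommRing R] [Algebra ℚ R]

theorem aeval_pSym (f : ℕ → R) (hf : f 0 = 0) (n : ℕ) :
    aeval (fun m : ℕ+ => f m) (pSym n) = f n := by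
  unfold pSym
  split_ifs with hn
  · exact aeval_X _ _
  · rw [map_zero, Nat.eq_zero_of_not_pos hn, hf]

theorem pSym_coe (m : ℕ+) : pSym m = X m := by
  rw [pSym, dif_pos m.pos]
  rfl

theorem divSum_zero (a : ℕ →₀ ℕ) : divSum a 0 = 0 := by
  simp [divSum]

theorem isNewtonPair_aeval (f : ℕ → R) (hf : f 0 = 0) :
    IsNewtonPair f fun n => aeval (fun m : ℕ+ => f m) (eSym n) := by
  simpa only [aeval_pSym f hf] using isNewtonPair_pSym_eSym.map (aeval fun m : ℕ+ => f m)

end PowerSumSpecialization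

section Truncation
open MvPolynomial

variable (k : ℕ)

def truncX (n : ℕ) : MvPolynomial (Fin k) ℚ :=
  if h : 0 < n ∧ n ≤ k then X ⟨n - 1, by omega⟩ else 0

/-- The elementary symmetric functions forced on `Λ/E_{>k}` once `pᵢ = xᵢ` for `i ≤ k`. -/
def truncE (n : ℕ) : MvPolynomial (Fin k) ℚ :=
  if n ≤ k then aeval (fun m : ℕ+ => truncX k m) (eSym n) else 0

/-- Lifts the inverse of `ι_k` to `Λ`. -/
def psiK : SymmFn →ₐ[ℚ] MvPolynomial (Fin k) ℚ :=
  aeval fun m : ℕ+ => newtonPowerSums (truncE k) m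

theorem truncX_of_le {n : ℕ} (hn : 0 < n) (hnk : n ≤ k) :
    truncX k n = X ⟨n - 1, by omega⟩ :=
  dif_pos ⟨hn, hnk⟩

theorem isNewtonPair_truncE :
    IsNewtonPair (newtonPowerSums (truncE k)) (truncE k) :=
  isNewtonPair_newtonPowerSums (by rw [truncE, if_pos k.zero_le, isNewtonPair_pSym_eSym.1, map_one])

theorem psiK_eSym (n : ℕ) : psiK k (eSym n) = truncE k n :=
  (isNewtonPair_aeval _ (newtonPowerSums_zero _)).e_eq_of_p_eq (isNewtonPair_truncE k)
    (fun _ _ _ => rfl) n le_rfl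

theorem psiK_pSym_of_le {n : ℕ} (hn : 0 < n) (hnk : n ≤ k) :
    psiK k (pSym n) = truncX k n := by
  rw [psiK, aeval_pSym _ (newtonPowerSums_zero _)]
  exact (isNewtonPair_truncE k).p_eq_of_e_eq (isNewtonPair_aeval (truncX k) (by simp [truncX]))
    (fun m hm => if_pos hm) n hn hnk

theorem egt_le_ker_psiK : Egt k ≤ RingHom.ker (psiK k) := by
  refine Ideal.span_le.2 ?_
  rintro _ ⟨n, hn, rfl⟩
  rw [SetLike.mem_coe, RingHom.mem_ker, psiK_eSym, truncE, if_neg (by omega)]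

def psiKBar : SymmFn ⧸ Egt k →ₐ[ℚ] MvPolynomial (Fin k) ℚ :=
  Ideal.Quotient.liftₐ (Egt k) (psiK k) fun _ hx => RingHom.mem_ker.1 (egt_le_ker_psiK k hx)

theorem psiKBar_mk (f : SymmFn) : psiKBar k (Ideal.Quotient.mk (Egt k) f) = psiK k f :=
  rfl

theorem iotaK_X (i : Fin k) : iotaK k (X i) = Ideal.Quotient.mk (Egt k) (pSym (i + 1)) :=
  aeval_X _ i

theorem psiKBar_iotaK (g : MvPolynomial (Fin k) ℚ) : psiKBar k (iotaK k g) = g := by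
  suffices (psiKBar k).comp (iotaK k) = AlgHom.id ℚ _ from DFunLike.congr_fun this g
  refine algHom_ext fun i => ?_
  rw [AlgHom.comp_apply, iotaK_X, psiKBar_mk, psiK_pSym_of_le k i.val.succ_pos i.2,
    truncX_of_le k i.val.succ_pos i.2]
  rfl

theorem iotaK_truncE (n : ℕ) :
    iotaK k (truncE k n) = Ideal.Quotient.mkₐ ℚ (Egt k) (eSym n) := by
  unfold truncE
  split_ifs with hnk
  · refine ((isNewtonPair_aeval (truncX k) (by simp [truncX])).map (iotaK k)).e_eq_of_p_eq
      (isNewtonPair_pSym_eSym.map _) (fun m hm hmk => ?_) n hnk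
    rw [truncX_of_le k hm hmk, iotaK_X, Ideal.Quotient.mkₐ_eq_mk, Nat.sub_add_cancel hm]
  · rw [map_zero, eq_comm, Ideal.Quotient.mkₐ_eq_mk, Ideal.Quotient.eq_zero_iff_mem]
    exact Ideal.subset_span ⟨n, by omega, rfl⟩

theorem iotaK_psiK (f : SymmFn) : iotaK k (psiK k f) = Ideal.Quotient.mk (Egt k) f := by
  suffices (iotaK k).comp (psiK k) = Ideal.Quotient.mkₐ ℚ (Egt k) from DFunLike.congr_fun this f
  refine algHom_ext fun m => ?_
  rw [AlgHom.comp_apply, psiK, aeval_X, ← pSym_coe]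
  exact ((isNewtonPair_truncE k).map (iotaK k)).p_eq_of_e_eq (isNewtonPair_pSym_eSym.map _)
    (fun n _ => iotaK_truncE k n) m m.pos le_rfl

theorem iotaK_bijective : Function.Bijective (iotaK k) :=
  ⟨Function.LeftInverse.injective (psiKBar_iotaK k), fun y => by
    obtain ⟨f, rfl⟩ := Ideal.Quotient.mk_surjective y
    exact ⟨psiK k f, iotaK_psiK k f⟩⟩

end Truncation

section LogDerivative
open PowerSeries

variable {R : Type*} [CommRing R]

theorem derivative_mul_eq_of_eq_mul {F G P Q : R⟦X⟧} (hF : d⁄dX R F = P * F)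
    (hG : d⁄dX R G = Q * G) : d⁄dX R (F * G) = (P + Q) * (F * G) := by
  rw [Derivation.leibniz, hF, hG, smul_eq_mul, smul_eq_mul]
  ring

theorem derivative_pow_eq_of_eq_mul {F P : R⟦X⟧} (hF : d⁄dX R F = P * F) (e : ℕ) :
    d⁄dX R (F ^ e) = (e • P) * F ^ e := by
  induction e with
  | zero => simp
  | succ e ih =>
    rw [pow_succ, derivative_mul_eq_of_eq_mul ih hF, succ_nsmul]

theorem derivative_prod_eq_of_eq_mul {ι : Type*} (s : Finset ι) {F P : ι → R⟦X⟧}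
    (h : ∀ i ∈ s, d⁄dX R (F i) = P i * F i) :
    d⁄dX R (∏ i ∈ s, F i) = (∑ i ∈ s, P i) * ∏ i ∈ s, F i := by
  classical
  induction s using Finset.induction_on with
  | empty => simp
  | insert i s hi ih =>
    rw [Finset.prod_insert hi, Finset.sum_insert hi,
      derivative_mul_eq_of_eq_mul (h i (Finset.mem_insert_self i s))
        (ih fun j hj => h j (Finset.mem_insert_of_mem hj))]

variable [Algebra ℚ R]

/-- `E'/E` for `E = ∑ eₙ tⁿ`, when `p` and `e` form a Newton pair. -/
def logDerivSeries (p : ℕ → R) : R⟦X⟧ :=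
  mk fun n => (-1 : ℚ) ^ n • p (n + 1)

theorem isNewtonPair_coeff {F : R⟦X⟧} {p : ℕ → R} (h0 : constantCoeff F = 1)
    (h : d⁄dX R F = logDerivSeries p * F) : IsNewtonPair p fun n => coeff n F := by
  refine ⟨show coeff 0 F = 1 by rwa [coeff_zero_eq_constantCoeff_apply], fun n => ?_⟩
  have hn := congrArg (coeff n) h
  rw [coeff_derivative, coeff_mul, Finset.Nat.sum_antidiagonal_eq_sum_range_succ_mk] at hn
  simp only [logDerivSeries, coeff_mk, smul_mul_assoc] at hn
  rw [← hn, Algebra.smul_def, mul_comm]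
  simp

end LogDerivative

section GeneratingPolynomial
open PowerSeries

theorem derivative_one_sub_neg_X_pow {d : ℕ} (hd : 0 < d) :
    d⁄dX ℚ (1 - (-X) ^ d : ℚ⟦X⟧) =
      logDerivSeries (fun n => if d ∣ n then (d : ℚ) else 0) * (1 - (-X) ^ d) := by
  have hX : (-X : ℚ⟦X⟧) ^ d = C ((-1) ^ d) * X ^ d := by rw [neg_pow, map_pow, map_neg, map_one]
  ext n
  rw [coeff_derivative, hX, mul_sub, mul_one, map_sub, map_sub, mul_left_comm, coeff_C_mul,
    coeff_C_mul, coeff_mul_X_pow', coeff_one, coeff_X_pow]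
  simp only [logDerivSeries, coeff_mk, smul_eq_mul]
  by_cases hnd : n + 1 = d
  · subst hnd
    simp [pow_succ]
  · rw [if_neg hnd, if_neg n.succ_ne_zero]
    by_cases hdvd : d ∣ n + 1
    · have hdn : d ≤ n := by
        have := Nat.le_of_dvd n.succ_pos hdvd
        omega
      have hsub : n - d + 1 = n + 1 - d := by omega
      rw [if_pos hdvd, if_pos hdn, hsub, if_pos (Nat.dvd_sub hdvd dvd_rfl), ← mul_assoc, ← pow_add,
        Nat.add_sub_cancel' hdn]
      ring
    · have hshift (hdn : d ≤ n) : ¬ d ∣ n - d + 1 := by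
        rwa [← Nat.dvd_add_self_right, show n - d + 1 + d = n + 1 by omega]
      rw [if_neg hdvd]
      split_ifs with hdn h <;> simp_all

/-- `∑ eₙ tⁿ` after `pₙ ↦ sₙ`: a part `d` contributes the `d`-th roots of unity `ζ`, with
`∏ (1 + ζ t) = 1 - (-t)^d` and power sums `d·[d ∣ n]`. -/
def elementaryGenPoly (a : ℕ →₀ ℕ) : Polynomial ℚ :=
  ∏ d ∈ a.support.erase 0, (1 - (-Polynomial.X) ^ d) ^ a d

variable (a : ℕ →₀ ℕ)

theorem coe_elementaryGenPoly :
    (elementaryGenPoly a : ℚ⟦X⟧) = ∏ d ∈ a.support.erase 0, (1 - (-X) ^ d) ^ a d := by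
  rw [elementaryGenPoly, ← Polynomial.coeToPowerSeries.ringHom_apply, map_prod]
  simp [Polynomial.coeToPowerSeries.ringHom_apply]

theorem natDegree_elementaryGenPoly_le :
    (elementaryGenPoly a).natDegree ≤ ∑ i ∈ a.support, i * a i := by
  classical
  rw [← Finset.sum_erase _ (f := fun i => i * a i) (zero_mul (a 0))]
  refine (Polynomial.natDegree_prod_le _ _).trans (Finset.sum_le_sum fun d _ => ?_)
  refine Polynomial.natDegree_pow_le.trans ?_
  rw [mul_comm]
  gcongr
  compute_degree

theorem sum_ite_dvd_eq_sum_divisors {m : ℕ} (hm : m ≠ 0) :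
    ∑ d ∈ a.support.erase 0, (if d ∣ m then d * a d else 0) = ∑ d ∈ m.divisors, d * a d := by
  rw [← Finset.sum_filter]
  refine Finset.sum_subset (fun d hd => ?_) (fun d hd hd' => ?_)
  · simp_all
  · simp_all [Nat.ne_of_gt (Nat.pos_of_mem_divisors hd)]

theorem sum_logDerivSeries_parts :
    ∑ d ∈ a.support.erase 0, a d • logDerivSeries (fun n => if d ∣ n then (d : ℚ) else 0) =
      logDerivSeries (divSum a) := by
  ext n
  simp only [map_sum, map_nsmul, logDerivSeries, coeff_mk, divSum, smul_eq_mul]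
  rw [← sum_ite_dvd_eq_sum_divisors a n.succ_ne_zero]
  push_cast
  rw [Finset.mul_sum]
  refine Finset.sum_congr rfl fun d _ => ?_
  split_ifs <;> ring

theorem isNewtonPair_elementaryGenPoly :
    IsNewtonPair (divSum a) fun n => (elementaryGenPoly a).coeff n := by
  have h0 : constantCoeff (elementaryGenPoly a : ℚ⟦X⟧) = 1 := by
    rw [coe_elementaryGenPoly, map_prod]
    refine Finset.prod_eq_one fun d hd => ?_
    rw [map_pow, map_sub, map_one, map_pow, map_neg, constantCoeff_X, neg_zero,
      zero_pow (Finset.ne_of_mem_erase hd), sub_zero, one_pow]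
  have hder : d⁄dX ℚ (elementaryGenPoly a : ℚ⟦X⟧) =
      logDerivSeries (divSum a) * elementaryGenPoly a := by
    rw [coe_elementaryGenPoly, ← sum_logDerivSeries_parts]
    exact derivative_prod_eq_of_eq_mul _ fun d hd => derivative_pow_eq_of_eq_mul
      (derivative_one_sub_neg_X_pow (Nat.pos_of_ne_zero (Finset.ne_of_mem_erase hd))) _
  simpa only [Polynomial.coeff_coe] using isNewtonPair_coeff h0 hder

end GeneratingPolynomial

section Specialization
open MvPolynomial

variable (a : ℕ →₀ ℕ)

def divSumEval : SymmFn →ₐ[ℚ] ℚ :=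
  aeval fun m : ℕ+ => divSum a m

theorem uideal_eq_ker_divSumEval : Uideal a = RingHom.ker (divSumEval a) := by
  rw [divSumEval, ker_aeval_eq_span, Uideal]
  congr 1
  ext g
  constructor
  · rintro ⟨n, hn, rfl⟩
    exact ⟨⟨n, hn⟩, by rw [uSym, pSym, dif_pos hn]; rfl⟩
  · rintro ⟨m, rfl⟩
    exact ⟨m, m.pos, by rw [uSym, pSym_coe]⟩

theorem divSumEval_eSym (n : ℕ) : divSumEval a (eSym n) = (elementaryGenPoly a).coeff n :=
  (isNewtonPair_aeval (divSum a) (divSum_zero a)).e_eq_of_p_eq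
    (isNewtonPair_elementaryGenPoly a) (fun _ _ _ => rfl) n le_rfl

variable {a} {k : ℕ}

theorem egt_le_ker_divSumEval (hA : ∑ i ∈ a.support, i * a i ≤ k) :
    Egt k ≤ RingHom.ker (divSumEval a) := by
  refine Ideal.span_le.2 ?_
  rintro _ ⟨n, hn, rfl⟩
  rw [SetLike.mem_coe, RingHom.mem_ker, divSumEval_eSym]
  exact Polynomial.coeff_eq_zero_of_natDegree_lt
    ((natDegree_elementaryGenPoly_le a).trans_lt (by omega))

theorem comap_iotaK_map_uideal (hA : ∑ i ∈ a.support, i * a i ≤ k) :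
    Ideal.comap (iotaK k) (Ideal.map (Ideal.Quotient.mk (Egt k)) (Uideal a)) =
      Ideal.span {g | ∃ i : Fin k, g = X i - C (divSum a ((i : ℕ) + 1))} := by
  set φ := Ideal.Quotient.liftₐ (Egt k) (divSumEval a)
    fun _ hx => RingHom.mem_ker.1 (egt_le_ker_divSumEval hA hx)
  have hker : RingHom.ker (divSumEval a) =
      Ideal.comap (Ideal.Quotient.mk (Egt k)) (RingHom.ker φ) := rfl
  have hcomp : φ.comp (iotaK k) = aeval fun i : Fin k => divSum a ((i : ℕ) + 1) := by
    refine algHom_ext fun i => ?_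
    rw [AlgHom.comp_apply, iotaK_X, aeval_X]
    exact aeval_pSym _ (divSum_zero a) _
  rw [uideal_eq_ker_divSumEval, hker,
    Ideal.map_comap_of_surjective _ Ideal.Quotient.mk_surjective, ← ker_aeval_eq_span, ← hcomp]
  rfl

end Specialization

theorem comap_image_u_pow_general (a : ℕ →₀ ℕ) (r k : ℕ) (hA : ∑ i ∈ a.support, i * a i ≤ k) :
    Ideal.comap (iotaK k)
        (Ideal.map (Ideal.Quotient.mk (Egt k)) ((Uideal a) ^ r)) =
      (Ideal.span {g : MvPolynomial (Fin k) ℚ |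
        ∃ i : Fin k, g = MvPolynomial.X i - MvPolynomial.C (divSum a ((i : ℕ) + 1))}) ^ r := by
  rw [Ideal.map_pow, ← comap_iotaK_map_uideal hA]
  exact Ideal.comap_pow_of_bijective _ (iotaK_bijective k) _ r

/-- For `r, k ≥ 1` with `|A| ≤ k`, the preimage under
`ι_k : ℚ[x₁, …, x_k] → Λ/E_{>k}` of the image of `U^r` in `Λ/E_{>k}` is exactly the ideal
`(x₁ − s₁, …, x_k − s_k)^r`, where `s_i = ∑_{d | i} d·a_d`. -/
theorem comap_image_u_pow (a : ℕ →₀ ℕ) (ha0 : a 0 = 0) (r k : ℕ)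
    (hr : 1 ≤ r) (hk : 1 ≤ k) (hA : ∑ i ∈ a.support, i * a i ≤ k) :
    Ideal.comap (iotaK k)
        (Ideal.map (Ideal.Quotient.mk (Egt k)) ((Uideal a) ^ r)) =
      (Ideal.span {g : MvPolynomial (Fin k) ℚ |
        ∃ i : Fin k, g = MvPolynomial.X i - MvPolynomial.C (divSum a ((i : ℕ) + 1))}) ^ r :=
  comap_image_u_pow_general a r k hA

end
end

section
/- Fix r ≥ 1 and k ≥ 1 with |A| ≤ k. Let E_{>k} ⊆ Λ be the ideal generated by { e_m : m > k } and U ⊆ Λ the ideal generated by { uₙ : n ≥ 1 }. Then the ℚ-algebra homomorphism ℚ[x₁, …, x_k] → Λ/(U^r + E_{>k}) sending x_i to the class of u_i is surjective with kernel equal to the ideal (x₁, …, x_k)^r; in particular it induces a ℚ-algebra isomorphism ℚ[x₁, …, x_k]/(x₁, …, x_k)^r ≅ Λ/(U^r + E_{>k}). -/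
noncomputable section

/-- The `ℚ`-algebra homomorphism `ℚ[x₁, …, x_k] → Λ/(U^r + E_{>k})` sending `x_i` to the
class of `u_i`. -/
def uQuotHom (a : ℕ →₀ ℕ) (r k : ℕ) :
    MvPolynomial (Fin k) ℚ →ₐ[ℚ] SymmFn ⧸ ((Uideal a) ^ r + Egt k) :=
  MvPolynomial.aeval fun i : Fin k =>
    Ideal.Quotient.mk ((Uideal a) ^ r + Egt k) (uSym a ((i : ℕ) + 1))

/-!
Modulo `E_{>k}`, Newton's identities express every `pₙ` through `p₁, …, p_k`, and `p_i` is `u_i`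
plus a constant; this gives surjectivity, and shows that a homomorphism out of `Λ/E_{>k}` is
determined by the images of `p₁, …, p_k`.

For the kernel we build `Θ : Λ → ℚ[x₁, …, x_k]` with `Θ(u_i) = x_i` (`i ≤ k`), `Θ(E_{>k}) = 0` and
`Θ(U) ⊆ (x)`; it descends to a left inverse `Λ/(U^r + E_{>k}) → ℚ[x]/(x)^r`. A homomorphism
`Θ : Λ → R` is the same as a power series `E = ∑ Θ(eₙ) Xⁿ` with constant term `1`, the `Θ(pₙ)`
being read off from `X E'/E`. Truncating `E` to degree `k` kills `E_{>k}` and does not change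
`X E'/E` modulo `X^{k+1}`, so `Θ(p_i) = x_i + ∑_{d ∣ i} d a_d` can be prescribed for `i ≤ k`.
Modulo `(x)`, `Θ` becomes the specialization `pₙ ↦ ∑_{d ∣ n} d a_d`, because that specialization
also kills `E_{>k}`: its `E` is `∏_d (1 - (-X)^d)^{a_d}`, of degree `|A| ≤ k`. Hence `Θ(uₙ) ∈ (x)`.
-/

section LogDeriv

open PowerSeries

variable {R : Type*} [CommRing R]

/-- `g = X f' / f`, stated without dividing by `f`. -/
def HasLogDeriv (f g : R⟦X⟧) : Prop := X * d⁄dX R f = g * f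

theorem HasLogDeriv.mul {f g p q : R⟦X⟧} (hf : HasLogDeriv f p) (hg : HasLogDeriv g q) :
    HasLogDeriv (f * g) (p + q) := by
  unfold HasLogDeriv at *
  rw [Derivation.leibniz, smul_eq_mul, smul_eq_mul]
  linear_combination f * hg + g * hf

theorem HasLogDeriv.pow {f p : R⟦X⟧} (h : HasLogDeriv f p) (n : ℕ) :
    HasLogDeriv (f ^ n) (n • p) := by
  induction n with
  | zero => simp [HasLogDeriv]
  | succ n ih => simpa [pow_succ, add_mul] using ih.mul h

theorem HasLogDeriv.prod {ι : Type*} (s : Finset ι) {f p : ι → R⟦X⟧}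
    (h : ∀ i ∈ s, HasLogDeriv (f i) (p i)) : HasLogDeriv (∏ i ∈ s, f i) (∑ i ∈ s, p i) := by
  induction s using Finset.cons_induction with
  | empty => simp [HasLogDeriv]
  | cons i s hi ih =>
    rw [Finset.prod_cons, Finset.sum_cons]
    exact (h i (s.mem_cons_self i)).mul (ih fun j hj => h j (Finset.mem_cons_of_mem hj))

theorem X_pow_dvd_X_mul_derivative {n : ℕ} {f : R⟦X⟧} (h : X ^ n ∣ f) :
    X ^ n ∣ X * d⁄dX R f := by
  rw [X_pow_dvd_iff] at h ⊢
  rintro (_ | m) hm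
  · simp
  · rw [coeff_succ_X_mul, coeff_derivative, h _ hm, zero_mul]

theorem HasLogDeriv.X_pow_dvd_sub {n : ℕ} {f g p q : R⟦X⟧} (hf : HasLogDeriv f p)
    (hg : HasLogDeriv g q) (hfg : X ^ n ∣ f - g) (hu : IsUnit g) : X ^ n ∣ p - q := by
  have h : X ^ n ∣ p * (f - g) + (p - q) * g := by
    convert X_pow_dvd_X_mul_derivative hfg using 1
    rw [map_sub, mul_sub X, hf, hg]
    ring
  rw [← hu.dvd_mul_right]
  exact (dvd_add_right (dvd_mul_of_dvd_right hfg p)).mp h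

def negGeomSeries (d : ℕ) : R⟦X⟧ := mk fun n => if d ∣ n then (-1) ^ n else 0

theorem negGeomSeries_mul_one_sub {d : ℕ} (hd : d ≠ 0) :
    negGeomSeries d * (1 - (-X) ^ d : R⟦X⟧) = 1 := by
  have h : negGeomSeries d = rescale (-1 : R) (expand d hd (mk 1)) := by
    ext n
    by_cases hdn : d ∣ n <;> simp [negGeomSeries, coeff_rescale, coeff_expand, hdn]
  have := congrArg (fun φ => rescale (-1 : R) (expand d hd φ)) (mk_one_mul_one_sub_eq_one R)
  simpa [h, rescale_neg_one_X] using this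

theorem hasLogDeriv_one_sub_neg_X_pow {d : ℕ} (hd : d ≠ 0) :
    HasLogDeriv (1 - (-X) ^ d : R⟦X⟧) (d • (1 - negGeomSeries d)) := by
  unfold HasLogDeriv
  rw [smul_mul_assoc, sub_mul, negGeomSeries_mul_one_sub hd, map_sub, Derivation.map_one_eq_zero,
    Derivation.leibniz_pow]
  obtain ⟨d, rfl⟩ : ∃ d', d = d' + 1 := ⟨d - 1, by omega⟩
  simp only [map_neg, derivative_X, Nat.add_sub_cancel, nsmul_eq_mul, smul_eq_mul]
  push_cast
  ring

end LogDeriv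

section Newton

open PowerSeries

variable {R : Type*} [CommRing R] [Algebra ℚ R]

/-- `∑_{n ≥ 1} (-1)^{n-1} tₙ Xⁿ`; Newton's identities say that it is `X E'/E` for the
generating function `E` of the `eₙ`. -/
def signedSeries (t : ℕ → R) : R⟦X⟧ := X * mk fun n => (-1 : ℚ) ^ n • t (n + 1)

theorem coeff_succ_signedSeries (t : ℕ → R) (n : ℕ) :
    coeff (n + 1) (signedSeries t) = (-1 : ℚ) ^ n • t (n + 1) := by
  rw [signedSeries, coeff_succ_X_mul, coeff_mk]

def IsNewtonSeq (t e : ℕ → R) : Prop :=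
  e 0 = 1 ∧ ∀ n : ℕ, (n + 1 : ℚ) • e (n + 1) =
    ∑ j ∈ Finset.range (n + 1), (-1 : ℚ) ^ j • (t (j + 1) * e (n - j))

theorem isNewtonSeq_iff_hasLogDeriv {t e : ℕ → R} :
    IsNewtonSeq t e ↔ e 0 = 1 ∧ HasLogDeriv (mk e) (signedSeries t) := by
  have hcoeff : ∀ n, coeff (n + 1) (signedSeries t * mk e) =
      ∑ j ∈ Finset.range (n + 1), (-1 : ℚ) ^ j • (t (j + 1) * e (n - j)) := by
    intro n
    rw [signedSeries, mul_assoc, coeff_succ_X_mul, coeff_mul,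
      Finset.Nat.sum_antidiagonal_eq_sum_range_succ_mk]
    simp
  refine and_congr_right fun _ => ⟨fun h => ?_, fun h n => ?_⟩
  · ext (_ | n)
    · simp [signedSeries, mul_assoc]
    · rw [coeff_succ_X_mul, coeff_derivative, hcoeff, ← h n, coeff_mk, Algebra.smul_def,
        mul_comm]
      simp
  · have := congrArg (coeff (n + 1)) h
    rw [coeff_succ_X_mul, coeff_derivative, hcoeff, coeff_mk, mul_comm] at this
    rw [← this, Algebra.smul_def]
    simp

theorem IsNewtonSeq.map {S : Type*} [CommRing S] [Algebra ℚ S] {t e : ℕ → R}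
    (h : IsNewtonSeq t e) (f : R →ₐ[ℚ] S) : IsNewtonSeq (fun n => f (t n)) (fun n => f (e n)) := by
  refine ⟨show f (e 0) = 1 by rw [h.1, map_one], fun n => ?_⟩
  simp only [← map_mul, ← map_smul, ← map_sum, h.2 n]

theorem IsNewtonSeq.unique {t e e' : ℕ → R} (h : IsNewtonSeq t e) (h' : IsNewtonSeq t e') :
    e = e' := by
  funext n
  induction n using Nat.strong_induction_on with
  | _ n ih =>
    rcases n with _ | n
    · rw [h.1, h'.1]
    · have hsum := h.2 n
      rw [Finset.sum_congr rfl fun j _ => by rw [ih (n - j) (by omega)], ← h'.2 n] at hsum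
      simpa [smul_right_inj (Nat.cast_add_one_ne_zero n : (n + 1 : ℚ) ≠ 0)] using hsum

end Newton

section SymmFn

open PowerSeries

variable {R : Type*} [CommRing R] [Algebra ℚ R]

theorem pSym_coe_s9 (i : ℕ+) : pSym i = MvPolynomial.X i := dif_pos i.pos

theorem aeval_pSym_succ (t : ℕ → R) (n : ℕ) :
    MvPolynomial.aeval (fun i : ℕ+ => t i) (pSym (n + 1)) = t (n + 1) := by
  rw [show n + 1 = ((n.succPNat : ℕ+) : ℕ) from rfl, pSym_coe_s9, MvPolynomial.aeval_X]

theorem algHom_uSym (f : SymmFn →ₐ[ℚ] R) (a : ℕ →₀ ℕ) (n : ℕ) :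
    f (uSym a n) = f (pSym n) - algebraMap ℚ R (divSum a n) := by
  rw [uSym, map_sub, ← MvPolynomial.algebraMap_eq, f.commutes]

theorem isNewtonSeq_eSym : IsNewtonSeq pSym eSym := by
  refine ⟨by rw [eSym], fun n => ?_⟩
  rw [eSym, smul_inv_smul₀ (Nat.cast_add_one_ne_zero n)]

theorem algHom_eSym_eq_coeff (f : SymmFn →ₐ[ℚ] R) {E : R⟦X⟧} (hE0 : constantCoeff E = 1)
    (hE : HasLogDeriv E (signedSeries fun n => f (pSym n))) (m : ℕ) :
    f (eSym m) = coeff m E := by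
  have hmk : (mk fun n => coeff n E) = E := ext fun n => coeff_mk n _
  have hE' : IsNewtonSeq (fun n => f (pSym n)) (fun n => coeff n E) :=
    isNewtonSeq_iff_hasLogDeriv.mpr ⟨by simpa using hE0, by rwa [hmk]⟩
  exact congrFun ((isNewtonSeq_eSym.map f).unique hE') m

theorem adjoin_pSym_union_eSym_eq_top (k : ℕ) :
    Algebra.adjoin ℚ (pSym '' Set.Icc 1 k ∪ eSym '' Set.Ioi k) = ⊤ := by
  set S := Algebra.adjoin ℚ (pSym '' Set.Icc 1 k ∪ eSym '' Set.Ioi k)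
  have hmem : ∀ n, pSym n ∈ S ∧ eSym n ∈ S := by
    intro n
    induction n using Nat.strong_induction_on with
    | _ n ih =>
    rcases n with _ | n
    · exact ⟨by simp [pSym], isNewtonSeq_eSym.1 ▸ one_mem S⟩
    have hnewton := isNewtonSeq_eSym.2 n
    rw [Finset.sum_range_succ, Nat.sub_self, isNewtonSeq_eSym.1, mul_one] at hnewton
    have hlow : ∑ j ∈ Finset.range n, (-1 : ℚ) ^ j • (pSym (j + 1) * eSym (n - j)) ∈ S :=
      sum_mem fun j hj => Subalgebra.smul_mem S (mul_mem
        (ih (j + 1) (by simp at hj; omega)).1 (ih (n - j) (by omega)).2) _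
    have hp : pSym (n + 1) ∈ S := by
      by_cases hn : n + 1 ≤ k
      · exact Algebra.subset_adjoin (Or.inl ⟨n + 1, ⟨by omega, hn⟩, rfl⟩)
      have he : eSym (n + 1) ∈ S :=
        Algebra.subset_adjoin (Or.inr ⟨n + 1, Set.mem_Ioi.mpr (by omega), rfl⟩)
      have h := sub_mem (Subalgebra.smul_mem S he (n + 1 : ℚ)) hlow
      rw [hnewton, add_sub_cancel_left] at h
      simpa [smul_smul, ← mul_pow] using Subalgebra.smul_mem S h ((-1 : ℚ) ^ n)
    have he := add_mem hlow (Subalgebra.smul_mem S hp ((-1 : ℚ) ^ n))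
    rw [← hnewton] at he
    refine ⟨hp, ?_⟩
    simpa [inv_smul_smul₀ (Nat.cast_add_one_ne_zero n : (n + 1 : ℚ) ≠ 0)] using
      Subalgebra.smul_mem S he ((n + 1 : ℚ)⁻¹)
  refine eq_top_iff.mpr ((MvPolynomial.adjoin_range_X (σ := ℕ+) (R := ℚ)).symm ▸ ?_)
  exact Algebra.adjoin_le fun _ ⟨i, hi⟩ => hi ▸ pSym_coe_s9 i ▸ (hmem i).1

theorem exists_algHom_eSym_eq_coeff (E : R⟦X⟧) (hE0 : constantCoeff E = 1) :
    ∃ Θ : SymmFn →ₐ[ℚ] R,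
      HasLogDeriv E (signedSeries fun n => Θ (pSym n)) ∧ ∀ m, Θ (eSym m) = coeff m E := by
  obtain ⟨u, rfl⟩ : IsUnit E := isUnit_iff_constantCoeff.mpr (hE0 ▸ isUnit_one)
  set Q := d⁄dX R u * ↑u⁻¹
  set Θ : SymmFn →ₐ[ℚ] R :=
    MvPolynomial.aeval fun i : ℕ+ => (-1 : ℚ) ^ ((i : ℕ) - 1) • coeff ((i : ℕ) - 1) Q
  have hQ : signedSeries (fun n => Θ (pSym n)) = X * Q := by
    rw [signedSeries]
    congr 1
    ext n
    simp [Θ, aeval_pSym_succ (fun i => (-1 : ℚ) ^ (i - 1) • coeff (i - 1) Q), smul_smul,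
      ← mul_pow]
  have hlog : HasLogDeriv (u : R⟦X⟧) (signedSeries fun n => Θ (pSym n)) := by
    rw [hQ, HasLogDeriv, mul_assoc, mul_assoc, Units.inv_mul, mul_one]
  exact ⟨Θ, hlog, algHom_eSym_eq_coeff Θ hE0 hlog⟩

theorem exists_algHom_pSym_eq_eSym_eq_zero (k : ℕ) (s : Fin k → R) :
    ∃ Θ : SymmFn →ₐ[ℚ] R,
      (∀ i : Fin k, Θ (pSym (i + 1)) = s i) ∧ ∀ m, k < m → Θ (eSym m) = 0 := by
  set f : SymmFn →ₐ[ℚ] R :=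
    MvPolynomial.aeval fun i : ℕ+ => if h : (i : ℕ) - 1 < k then s ⟨_, h⟩ else 0
  set H : R⟦X⟧ := mk fun n => f (eSym n)
  have hH0 : constantCoeff H = 1 := by simp [H, isNewtonSeq_eSym.1]
  have hH : HasLogDeriv H (signedSeries fun n => f (pSym n)) :=
    (isNewtonSeq_iff_hasLogDeriv.mp (isNewtonSeq_eSym.map f)).2
  set E : R⟦X⟧ := mk fun n => if n ≤ k then coeff n H else 0
  have hEH : X ^ (k + 1) ∣ E - H := X_pow_dvd_iff.mpr fun n hn => by
    simp [E, show n ≤ k by omega]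
  obtain ⟨Θ, hΘ, hΘe⟩ := exists_algHom_eSym_eq_coeff E (by simpa [E] using hH0)
  refine ⟨Θ, fun i => ?_, fun m hm => by simp [hΘe, E, Nat.not_le.mpr hm]⟩
  have hdvd := hΘ.X_pow_dvd_sub hH hEH (isUnit_iff_constantCoeff.mpr (hH0 ▸ isUnit_one))
  have hi := X_pow_dvd_iff.mp hdvd (i + 1) (by omega)
  rw [map_sub, coeff_succ_signedSeries, coeff_succ_signedSeries, sub_eq_zero,
    smul_right_inj (pow_ne_zero _ (by norm_num))] at hi
  rw [hi]
  simp [f, aeval_pSym_succ (fun n => if h : n - 1 < k then s ⟨_, h⟩ else 0)]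

end SymmFn

section CycleType

open PowerSeries

variable (a : ℕ →₀ ℕ)

/-- `det (1 + X σ)` for a permutation `σ` of cycle type `A`. Since `tr σⁿ = ∑_{d ∣ n} d a_d`,
the specialization `pₙ ↦ divSum a n` sends `eₙ` to its `n`-th coefficient. -/
def cycleTypePoly : Polynomial ℚ := ∏ d ∈ a.support, (1 - (-Polynomial.X) ^ d) ^ a d

theorem natDegree_cycleTypePoly_le : (cycleTypePoly a).natDegree ≤ ∑ d ∈ a.support, d * a d := by
  refine (Polynomial.natDegree_prod_le _ _).trans (Finset.sum_le_sum fun d _ => ?_)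
  refine Polynomial.natDegree_pow_le.trans ?_
  rw [mul_comm]
  refine Nat.mul_le_mul_right _ ((Polynomial.natDegree_sub_le _ _).trans ?_)
  simp [Polynomial.natDegree_pow]

theorem coeff_zero_cycleTypePoly (ha0 : a 0 = 0) : (cycleTypePoly a).coeff 0 = 1 := by
  rw [Polynomial.coeff_zero_eq_eval_zero, cycleTypePoly, Polynomial.eval_prod]
  refine Finset.prod_eq_one fun d hd => ?_
  have hd0 : d ≠ 0 := by rintro rfl; exact Finsupp.mem_support_iff.mp hd ha0
  simp [zero_pow hd0]

theorem signedSeries_divSum :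
    signedSeries (fun n => divSum a n) =
      ∑ d ∈ a.support, a d • d • (1 - negGeomSeries d) := by
  ext (_ | n)
  · simp [signedSeries, negGeomSeries]
  have hterm : ∀ d, coeff (n + 1) (a d • d • (1 - negGeomSeries d) : ℚ⟦X⟧) =
      if d ∣ n + 1 then (-1) ^ n * (d * a d : ℚ) else 0 := by
    intro d
    rw [map_nsmul, map_nsmul, map_sub, coeff_one, if_neg n.succ_ne_zero, negGeomSeries, coeff_mk]
    split_ifs
    · simp only [nsmul_eq_mul, pow_succ]
      ring
    · simp
  rw [coeff_succ_signedSeries, map_sum, Finset.sum_congr rfl fun d _ => hterm d,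
    ← Finset.sum_filter, ← Finset.mul_sum, divSum, smul_eq_mul]
  congr 1
  push_cast
  exact (Finset.sum_subset (fun d hd => Nat.mem_divisors.mpr ⟨(Finset.mem_filter.mp hd).2,
    n.succ_ne_zero⟩) fun d _ hd => by simp_all).symm

theorem hasLogDeriv_cycleTypePoly (ha0 : a 0 = 0) :
    HasLogDeriv (cycleTypePoly a : ℚ⟦X⟧) (signedSeries fun n => divSum a n) := by
  rw [signedSeries_divSum, cycleTypePoly, ← Polynomial.coeToPowerSeries.ringHom_apply, map_prod]
  refine HasLogDeriv.prod _ fun d hd => ?_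
  have hd0 : d ≠ 0 := by rintro rfl; exact Finsupp.mem_support_iff.mp hd ha0
  simpa [Polynomial.coeToPowerSeries.ringHom_apply] using
    (hasLogDeriv_one_sub_neg_X_pow (R := ℚ) hd0).pow (a d)

theorem aeval_divSum_eSym_eq_zero (ha0 : a 0 = 0) {k m : ℕ}
    (hA : ∑ i ∈ a.support, i * a i ≤ k) (hm : k < m) :
    MvPolynomial.aeval (fun i : ℕ+ => divSum a i) (eSym m) = 0 := by
  have hlog : HasLogDeriv (cycleTypePoly a : ℚ⟦X⟧)
      (signedSeries fun n => MvPolynomial.aeval (fun i : ℕ+ => divSum a i) (pSym n)) := by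
    simpa only [signedSeries, aeval_pSym_succ] using hasLogDeriv_cycleTypePoly a ha0
  rw [algHom_eSym_eq_coeff _ (by simpa using coeff_zero_cycleTypePoly a ha0) hlog,
    Polynomial.coeff_coe]
  exact Polynomial.coeff_eq_zero_of_natDegree_lt
    ((natDegree_cycleTypePoly_le a).trans_lt (hA.trans_lt hm))

end CycleType

section Quotient

open MvPolynomial

variable (a : ℕ →₀ ℕ) (r k : ℕ)

theorem uQuotHom_surjective : Function.Surjective (uQuotHom a r k) := by
  set π := Ideal.Quotient.mkₐ ℚ (Uideal a ^ r + Egt k)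
  have hgen : pSym '' Set.Icc 1 k ∪ eSym '' Set.Ioi k ⊆ (uQuotHom a r k).range.comap π := by
    rintro _ (⟨i, ⟨hi1, hik⟩, rfl⟩ | ⟨m, hm, rfl⟩)
    · obtain ⟨i, rfl⟩ : ∃ j, i = j + 1 := ⟨i - 1, by omega⟩
      have hp : π (pSym (i + 1)) =
          uQuotHom a r k (X ⟨i, by omega⟩) + algebraMap ℚ _ (divSum a (i + 1)) := by
        rw [uQuotHom, aeval_X, ← Ideal.Quotient.mkₐ_eq_mk ℚ, algHom_uSym, sub_add_cancel]
      rw [SetLike.mem_coe, Subalgebra.mem_comap, hp]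
      exact add_mem ⟨_, rfl⟩ (Subalgebra.algebraMap_mem _ _)
    · have he : eSym m ∈ Uideal a ^ r + Egt k :=
        Ideal.mem_sup_right (Ideal.subset_span ⟨m, hm, rfl⟩)
      rw [SetLike.mem_coe, Subalgebra.mem_comap, Ideal.Quotient.mkₐ_eq_mk,
        Ideal.Quotient.eq_zero_iff_mem.mpr he]
      exact zero_mem _
  have htop := Algebra.adjoin_le hgen
  rw [adjoin_pSym_union_eSym_eq_top] at htop
  intro y
  obtain ⟨x, rfl⟩ := Ideal.Quotient.mk_surjective y
  exact htop (Algebra.mem_top (x := x))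

theorem pow_span_X_le_ker_uQuotHom :
    Ideal.span (Set.range (X : Fin k → MvPolynomial (Fin k) ℚ)) ^ r ≤
      RingHom.ker (uQuotHom a r k) := by
  set π := Ideal.Quotient.mk (Uideal a ^ r + Egt k)
  have hX : Ideal.map (uQuotHom a r k) (Ideal.span (Set.range X)) ≤ Ideal.map π (Uideal a) := by
    rw [Ideal.map_span, Ideal.span_le]
    rintro _ ⟨_, ⟨i, rfl⟩, rfl⟩
    rw [SetLike.mem_coe, uQuotHom, aeval_X]
    exact Ideal.mem_map_of_mem _ (Ideal.subset_span ⟨i + 1, i.succ_pos, rfl⟩)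
  rw [RingHom.ker_eq_comap_bot, ← Ideal.map_le_iff_le_comap, Ideal.map_pow]
  calc _ ≤ Ideal.map π (Uideal a) ^ r := Ideal.pow_right_mono hX r
    _ = ⊥ := by
      rw [← Ideal.map_pow, Ideal.map_eq_bot_iff_le_ker, Ideal.mk_ker]
      exact le_sup_left

variable {a k}

theorem exists_algHom_uSym (ha0 : a 0 = 0) (hA : ∑ i ∈ a.support, i * a i ≤ k) :
    ∃ Θ : SymmFn →ₐ[ℚ] MvPolynomial (Fin k) ℚ,
      (∀ i : Fin k, Θ (uSym a (i + 1)) = X i) ∧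
      (∀ n, 0 < n → Θ (uSym a n) ∈ Ideal.span (Set.range X)) ∧ ∀ m, k < m → Θ (eSym m) = 0 := by
  obtain ⟨Θ, hΘp, hΘe⟩ :=
    exists_algHom_pSym_eq_eSym_eq_zero k fun i : Fin k => X i + C (divSum a (i + 1))
  refine ⟨Θ, fun i => ?_, fun n hn => ?_, hΘe⟩
  · rw [algHom_uSym, hΘp, MvPolynomial.algebraMap_eq, add_sub_cancel_right]
  set σ : SymmFn →ₐ[ℚ] ℚ := aeval fun i : ℕ+ => divSum a i
  have hσp : ∀ n, σ (pSym (n + 1)) = divSum a (n + 1) := aeval_pSym_succ _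
  have hσe : ∀ m, k < m → σ (eSym m) = 0 := fun _ => aeval_divSum_eSym_eq_zero a ha0 hA
  set π := Ideal.Quotient.mkₐ ℚ (Ideal.span (Set.range (X : Fin k → MvPolynomial (Fin k) ℚ)))
  have hπΘ : π.comp Θ = (Algebra.ofId ℚ _).comp σ := by
    refine AlgHom.ext_of_adjoin_eq_top (adjoin_pSym_union_eSym_eq_top k) ?_
    rintro _ (⟨i, ⟨hi1, hik⟩, rfl⟩ | ⟨m, hm, rfl⟩)
    · obtain ⟨i, rfl⟩ : ∃ j, i = j + 1 := ⟨i - 1, by omega⟩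
      have hXi : π (X ⟨i, by omega⟩) = 0 :=
        Ideal.Quotient.eq_zero_iff_mem.mpr (Ideal.subset_span ⟨_, rfl⟩)
      simp [hΘp ⟨i, by omega⟩, hXi, hσp, ← MvPolynomial.algebraMap_eq]
    · simp [hΘe m hm, hσe m hm]
  obtain ⟨n, rfl⟩ : ∃ j, n = j + 1 := ⟨n - 1, by omega⟩
  have h := congrArg (fun f => f (uSym a (n + 1))) hπΘ
  rw [AlgHom.comp_apply, AlgHom.comp_apply, algHom_uSym σ, hσp, Algebra.algebraMap_self_apply,
    sub_self, map_zero] at h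
  exact Ideal.Quotient.eq_zero_iff_mem.mp h

theorem ker_uQuotHom_le (ha0 : a 0 = 0) (hA : ∑ i ∈ a.support, i * a i ≤ k) :
    RingHom.ker (uQuotHom a r k) ≤
      Ideal.span (Set.range (X : Fin k → MvPolynomial (Fin k) ℚ)) ^ r := by
  obtain ⟨Θ, hΘx, hΘu, hΘe⟩ := exists_algHom_uSym ha0 hA
  set J := Ideal.span (Set.range (X : Fin k → MvPolynomial (Fin k) ℚ)) ^ r
  have hU : Uideal a ≤ (Ideal.span (Set.range X)).comap Θ :=
    Ideal.span_le.mpr fun _ ⟨n, hn, hx⟩ => hx ▸ hΘu n hn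
  have hI : Uideal a ^ r + Egt k ≤ J.comap Θ := sup_le
    ((Ideal.pow_right_mono hU r).trans (Ideal.le_comap_pow _ r))
    (Ideal.span_le.mpr fun _ ⟨m, hm, hx⟩ => by simp [hx, hΘe m hm])
  set Ψ := Ideal.Quotient.liftₐ _ ((Ideal.Quotient.mkₐ ℚ J).comp Θ) fun x hx =>
    Ideal.Quotient.eq_zero_iff_mem.mpr (hI hx)
  have hΨ : Ψ.comp (uQuotHom a r k) = Ideal.Quotient.mkₐ ℚ J :=
    MvPolynomial.algHom_ext fun i => by
      rw [AlgHom.comp_apply, uQuotHom, aeval_X]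
      exact congrArg (Ideal.Quotient.mkₐ ℚ J) (hΘx i)
  intro f hf
  rw [← Ideal.Quotient.eq_zero_iff_mem, ← Ideal.Quotient.mkₐ_eq_mk ℚ, ← hΨ, AlgHom.comp_apply,
    RingHom.mem_ker.mp hf, map_zero]

end Quotient

theorem uQuotHom_surjective_ker_general (a : ℕ →₀ ℕ) (ha0 : a 0 = 0) (r k : ℕ)
    (hA : ∑ i ∈ a.support, i * a i ≤ k) :
    Function.Surjective (uQuotHom a r k) ∧
      RingHom.ker (uQuotHom a r k) =
        (Ideal.span (Set.range (MvPolynomial.X : Fin k → MvPolynomial (Fin k) ℚ))) ^ r :=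
  ⟨uQuotHom_surjective a r k,
    (ker_uQuotHom_le r ha0 hA).antisymm (pow_span_X_le_ker_uQuotHom a r k)⟩

/-- For `r, k ≥ 1` with `|A| ≤ k`, the homomorphism
`ℚ[x₁, …, x_k] → Λ/(U^r + E_{>k})`, `x_i ↦ [u_i]`, is surjective with kernel
`(x₁, …, x_k)^r`; in particular it induces an isomorphism
`ℚ[x₁, …, x_k]/(x₁, …, x_k)^r ≅ Λ/(U^r + E_{>k})`. -/
theorem uQuotHom_surjective_ker (a : ℕ →₀ ℕ) (ha0 : a 0 = 0) (r k : ℕ)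
    (hr : 1 ≤ r) (hk : 1 ≤ k) (hA : ∑ i ∈ a.support, i * a i ≤ k) :
    Function.Surjective (uQuotHom a r k) ∧
      RingHom.ker (uQuotHom a r k) =
        (Ideal.span (Set.range (MvPolynomial.X : Fin k → MvPolynomial (Fin k) ℚ))) ^ r :=
  uQuotHom_surjective_ker_general a ha0 r k hA

end
end

section
/- For every m ≥ 1 the following identity holds in Λ: E_m = − ∑_{n=1}^{m} (−1)^n c_{m−n} ∑_{λ ⊢ n} sgn(λ) · u_λ / z_λ, where the inner sum is over all integer partitions λ of n, and for λ = 1^{m₁}2^{m₂}⋯ one sets u_λ := ∏_i u_i^{m_i}, z_λ := ∏_i i^{m_i} · m_i!, and sgn(λ) := ∏_{i even} (−1)^{m_i}. In particular, E_m lies in the ideal of Λ generated by { uₙ : n ≥ 1 }. -/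
noncomputable section

/-- The polynomial `∏_{i ≥ 1} (1 − tⁱ)^{a_i}` (a finite product). -/
def cPoly (a : ℕ →₀ ℕ) : Polynomial ℚ :=
  ∏ i ∈ a.support, (1 - Polynomial.X ^ i) ^ a i

/-- `c_m`, the coefficient of `t^m` in `∏_{i ≥ 1} (1 − tⁱ)^{a_i}` (`0` for `m < 0`,
which here cannot occur). -/
def cCoeff (a : ℕ →₀ ℕ) (m : ℕ) : ℚ :=
  (cPoly a).coeff m

/-- `E_m := −(−1)^m e_m + c_m`. -/
def ESym (a : ℕ →₀ ℕ) (m : ℕ) : SymmFn :=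
  (-(-1 : ℚ) ^ m) • eSym m + MvPolynomial.C (cCoeff a m)

/-- `u_λ := ∏_i u_i^{m_i}` for an integer partition `λ = 1^{m₁}2^{m₂}⋯`. -/
def uPart (a : ℕ →₀ ℕ) {n : ℕ} (π : n.Partition) : SymmFn :=
  (π.parts.map (uSym a)).prod

/-- `z_λ := ∏_i i^{m_i}·m_i!`. -/
def zPart {n : ℕ} (π : n.Partition) : ℚ :=
  ∏ i ∈ π.parts.toFinset, ((i : ℚ) ^ (π.parts.count i) * (Nat.factorial (π.parts.count i) : ℚ))

/-- `sgn(λ) := ∏_{i even} (−1)^{m_i}`. -/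
def sgnPart {n : ℕ} (π : n.Partition) : ℚ :=
  ∏ i ∈ π.parts.toFinset, if Even i then (-1 : ℚ) ^ (π.parts.count i) else 1

/-!
Put `E(t) = ∑ₘ (−1)ᵐ eₘ tᵐ`, `C(t) = ∑ₘ cₘ tᵐ` and `W(t) = ∑ₙ wₙ tⁿ` with
`wₙ = ∑_{λ ⊢ n} (−1)ⁿ sgn(λ) u_λ / z_λ`. Each is the solution with constant term `1` of an
equation `t F' = V F`. Newton's identities give `V = −∑ pₖ tᵏ` for `E`. Since
`t (1 − tⁱ)' = −i (∑_{j ≥ 1} t^{ij}) (1 − tⁱ)`, the factors of `C` give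
`V = −∑ₖ (∑_{d ∣ k} d a_d) tᵏ`. For `W`, removing one part `k` from a partition gives
`V = −∑ uₖ tᵏ`. The `V`s add under products and `pₖ = ∑_{d ∣ k} d a_d + uₖ`, so `E = C · W`
by uniqueness of the solution. The coefficient of `tᵐ` is the identity, and every `u_λ` with
`λ ≠ ∅` is a multiple of some `uₖ`.
-/

open Finset PowerSeries

namespace PowerSeries

section CommSemiring

variable {R : Type*} [CommSemiring R]

theorem coeff_X_mul_derivative (F : R⟦X⟧) (n : ℕ) :
    coeff n (X * d⁄dX R F) = n * coeff n F := by
  cases n with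
  | zero => simp
  | succ n => rw [coeff_succ_X_mul, coeff_derivative, mul_comm]; push_cast; rfl

theorem X_mul_derivative_mul {F G V W : R⟦X⟧} (hF : X * d⁄dX R F = V * F)
    (hG : X * d⁄dX R G = W * G) : X * d⁄dX R (F * G) = (V + W) * (F * G) := by
  calc X * d⁄dX R (F * G) = G * (X * d⁄dX R F) + F * (X * d⁄dX R G) := by
        rw [Derivation.leibniz, smul_eq_mul, smul_eq_mul]
        ring
    _ = (V + W) * (F * G) := by
        rw [hF, hG]
        ring

theorem X_mul_derivative_pow {F V : R⟦X⟧} (hF : X * d⁄dX R F = V * F) (e : ℕ) :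
    X * d⁄dX R (F ^ e) = (e • V) * F ^ e := by
  induction e with
  | zero => simp
  | succ e ih => rw [pow_succ, succ_nsmul]; exact X_mul_derivative_mul ih hF

theorem X_mul_derivative_prod {ι : Type*} (s : Finset ι) {F V : ι → R⟦X⟧}
    (hF : ∀ i ∈ s, X * d⁄dX R (F i) = V i * F i) :
    X * d⁄dX R (∏ i ∈ s, F i) = (∑ i ∈ s, V i) * ∏ i ∈ s, F i := by
  classical
  induction s using Finset.induction_on with
  | empty => simp
  | insert j s hj ih =>
    rw [prod_insert hj, sum_insert hj]
    exact X_mul_derivative_mul (hF j (mem_insert_self j s))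
      (ih fun i hi => hF i (mem_insert_of_mem hi))

def multiplesSeries (i : ℕ) : R⟦X⟧ := mk fun n => if 0 < n ∧ i ∣ n then 1 else 0

end CommSemiring

section CommRing

variable {R : Type*} [CommRing R]

theorem eq_of_X_mul_derivative_eq [IsAddTorsionFree R] {F G V : R⟦X⟧}
    (hF : X * d⁄dX R F = V * F) (hG : X * d⁄dX R G = V * G)
    (hF0 : constantCoeff F = 1) (hG0 : constantCoeff G = 1) : F = G := by
  obtain ⟨u, rfl⟩ : IsUnit G := isUnit_iff_constantCoeff.mpr (hG0 ▸ isUnit_one)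
  have hinv : (↑u⁻¹ : R⟦X⟧) * u = 1 := u.inv_mul
  have hconst : d⁄dX R (F * ↑u⁻¹) = 0 := by
    refine X_mul_cancel ?_
    rw [mul_zero, Derivation.leibniz, smul_eq_mul, smul_eq_mul, derivative_inv]
    linear_combination
      (↑u⁻¹ : R⟦X⟧) * hF - F * (↑u⁻¹ : R⟦X⟧) ^ 2 * hG - V * F * ↑u⁻¹ * hinv
  have hinv0 : constantCoeff (↑u⁻¹ : R⟦X⟧) = 1 := by
    simpa only [map_mul, map_one, hG0, mul_one] using congrArg constantCoeff hinv
  have hquot : F * ↑u⁻¹ = 1 :=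
    derivative.ext (by rw [hconst, derivative_one]) (by simp [hF0, hinv0])
  calc F = F * ↑u⁻¹ * u := by rw [mul_assoc, hinv, mul_one]
    _ = u := by rw [hquot, one_mul]

theorem multiplesSeries_mul_one_sub_X_pow {i : ℕ} (hi : 0 < i) :
    multiplesSeries i * (1 - X ^ i : R⟦X⟧) = X ^ i := by
  ext n
  rw [mul_sub, mul_one, map_sub, coeff_mul_X_pow', coeff_X_pow, multiplesSeries, coeff_mk]
  rcases lt_trichotomy n i with hn | rfl | hn
  · have hndvd : ¬ (0 < n ∧ i ∣ n) := fun h => (Nat.le_of_dvd h.1 h.2).not_gt hn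
    simp [hndvd, hn.ne, hn.not_ge]
  · simp [hi]
  · simp [coeff_mk, Nat.dvd_sub_self_right, hn, hn.le, hn.ne', hn.not_ge, hi.trans hn]

theorem X_mul_derivative_one_sub_X_pow {i : ℕ} (hi : 0 < i) :
    X * d⁄dX R (1 - X ^ i) = -(i • multiplesSeries i) * (1 - X ^ i) := by
  rw [neg_mul, smul_mul_assoc, multiplesSeries_mul_one_sub_X_pow hi, map_sub, derivative_one,
    derivative_pow, derivative_X, mul_one, zero_sub, mul_neg, mul_left_comm,
    mul_pow_sub_one hi.ne', nsmul_eq_mul]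

end CommRing

end PowerSeries

theorem pSym_zero : pSym 0 = 0 := by simp [pSym]

theorem uSym_zero (a : ℕ →₀ ℕ) : uSym a 0 = 0 := by simp [uSym, pSym_zero, divSum]

theorem natCast_smul_eSym_succ (n : ℕ) :
    ((n + 1 : ℕ) : ℚ) • eSym (n + 1) =
      ∑ j ∈ range (n + 1), (-1 : ℚ) ^ j • (pSym (j + 1) * eSym (n - j)) := by
  rw [eSym, smul_smul, Nat.cast_succ, mul_inv_cancel₀ (by positivity), one_smul]

def eSeries : SymmFn⟦X⟧ := mk fun m => (-1 : ℚ) ^ m • eSym m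

def pSeries : SymmFn⟦X⟧ := mk pSym

theorem X_mul_derivative_eSeries : X * d⁄dX SymmFn eSeries = -pSeries * eSeries := by
  refine PowerSeries.ext fun n => ?_
  rw [coeff_X_mul_derivative, neg_mul, map_neg, coeff_mul]
  simp only [eSeries, pSeries, coeff_mk]
  cases n with
  | zero => simp [pSym_zero]
  | succ n =>
    rw [Nat.sum_antidiagonal_succ, pSym_zero, zero_mul, zero_add,
      Nat.sum_antidiagonal_eq_sum_range_succ_mk, ← nsmul_eq_mul,
      ← Nat.cast_smul_eq_nsmul ℚ, smul_comm, natCast_smul_eSym_succ, smul_sum,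
      ← sum_neg_distrib]
    refine sum_congr rfl fun j hj => ?_
    obtain ⟨d, rfl⟩ := Nat.exists_eq_add_of_le (Nat.lt_succ_iff.mp (mem_range.mp hj))
    have hsign : (-1 : ℚ) ^ (j + d + 1) * (-1) ^ j = -(-1) ^ d := by
      have hsq : ((-1 : ℚ) ^ j) ^ 2 = 1 := by rw [← pow_mul, pow_mul', neg_one_sq, one_pow]
      linear_combination (-(-1 : ℚ) ^ d) * hsq
    rw [smul_smul, hsign, Nat.add_sub_cancel_left, neg_smul, mul_smul_comm]

def cSeries (a : ℕ →₀ ℕ) : SymmFn⟦X⟧ := mk fun m => MvPolynomial.C (cCoeff a m)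

def dSeries (a : ℕ →₀ ℕ) : SymmFn⟦X⟧ := mk fun k => MvPolynomial.C (divSum a k)

theorem cSeries_eq_prod (a : ℕ →₀ ℕ) :
    cSeries a = ∏ i ∈ a.support, (1 - X ^ i) ^ a i := by
  have hmap : cSeries a = PowerSeries.map MvPolynomial.C (cPoly a : ℚ⟦X⟧) := by
    ext m; simp [cSeries, cCoeff]
  rw [hmap, cPoly, ← Polynomial.coeToPowerSeries.ringHom_apply]
  simp [map_prod]

theorem sum_support_ite_dvd (a : ℕ →₀ ℕ) (k : ℕ) :
    ∑ i ∈ a.support, (if 0 < k ∧ i ∣ k then a i * i else 0) =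
      ∑ d ∈ k.divisors, d * a d := by
  have hdiv : ∀ i, (0 < k ∧ i ∣ k) ↔ i ∈ k.divisors := fun i => by
    rw [Nat.mem_divisors, and_comm, Nat.pos_iff_ne_zero]
  simp_rw [hdiv, sum_ite_mem, mul_comm (a _)]
  refine sum_subset inter_subset_right fun d _ hd => ?_
  simp_all

theorem sum_support_smul_multiplesSeries (a : ℕ →₀ ℕ) :
    ∑ i ∈ a.support, (a i * i) • multiplesSeries i = dSeries a := by
  refine PowerSeries.ext fun k => ?_
  rw [map_sum, dSeries, coeff_mk, divSum, ← sum_support_ite_dvd, Nat.cast_sum, map_sum]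
  refine sum_congr rfl fun i _ => ?_
  rw [map_nsmul, multiplesSeries, coeff_mk]
  split_ifs <;> simp

theorem ne_zero_of_mem_support {a : ℕ →₀ ℕ} (ha0 : a 0 = 0) {i : ℕ}
    (hi : i ∈ a.support) : i ≠ 0 := by
  rintro rfl
  exact Finsupp.mem_support_iff.mp hi ha0

theorem X_mul_derivative_cSeries (a : ℕ →₀ ℕ) (ha0 : a 0 = 0) :
    X * d⁄dX SymmFn (cSeries a) = -dSeries a * cSeries a := by
  rw [cSeries_eq_prod, X_mul_derivative_prod _ fun i hi =>
    X_mul_derivative_pow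
      (X_mul_derivative_one_sub_X_pow (Nat.pos_of_ne_zero (ne_zero_of_mem_support ha0 hi))) _,
    ← sum_support_smul_multiplesSeries]
  simp [smul_neg, mul_smul, sum_neg_distrib]

def partCoeff (s : Multiset ℕ) : ℚ :=
  ∏ i ∈ s.toFinset, (-(i : ℚ)⁻¹) ^ s.count i / (s.count i).factorial

theorem partCoeff_parts {n : ℕ} (π : n.Partition) :
    partCoeff π.parts = (-1) ^ n * (sgnPart π / zPart π) := by
  have hsign : (-1 : ℚ) ^ n = ∏ i ∈ π.parts.toFinset, ((-1) ^ i) ^ π.parts.count i := by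
    conv_lhs => rw [← π.parts_sum, Finset.sum_multiset_count, ← prod_pow_eq_pow_sum]
    simp only [smul_eq_mul, pow_mul']
  rw [hsign, sgnPart, zPart, ← prod_div_distrib, ← prod_mul_distrib, partCoeff]
  refine prod_congr rfl fun i _ => ?_
  have hsgn : ((-1 : ℚ) ^ i) ^ π.parts.count i * (if Even i then (-1) ^ π.parts.count i else 1)
      = (-1) ^ π.parts.count i := by
    rcases Nat.even_or_odd i with hev | hodd
    · rw [if_pos hev, hev.neg_one_pow, one_pow, one_mul]
    · rw [if_neg (Nat.not_even_iff_odd.mpr hodd), hodd.neg_one_pow, mul_one]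
  have hneg :
      (-(i : ℚ)⁻¹) ^ π.parts.count i = (-1) ^ π.parts.count i / i ^ π.parts.count i := by
    rw [div_eq_mul_inv, ← inv_pow, ← mul_pow, neg_one_mul]
  rw [← mul_div_assoc, hsgn, hneg, div_div]

theorem natCast_count_succ_mul_partCoeff_cons (k : ℕ) (s : Multiset ℕ) :
    ((s.count k + 1 : ℕ) : ℚ) * partCoeff (k ::ₘ s) = -(k : ℚ)⁻¹ * partCoeff s := by
  classical
  set S := (k ::ₘ s).toFinset
  have hk : k ∈ S := by simp [S]
  have hs : partCoeff s = ∏ i ∈ S, (-(i : ℚ)⁻¹) ^ s.count i / (s.count i).factorial :=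
    prod_subset (by simp [S, Multiset.toFinset_cons, subset_insert]) fun i _ hi => by
      simp [Multiset.count_eq_zero_of_notMem (Multiset.mem_toFinset.not.mp hi)]
  rw [hs, partCoeff, ← mul_prod_erase S _ hk, ← mul_prod_erase S _ hk, Multiset.count_cons_self,
    prod_congr rfl fun i hi => by rw [Multiset.count_cons_of_ne (ne_of_mem_erase hi)]]
  rw [pow_succ, Nat.factorial_succ]
  push_cast
  field_simp

def partTerm (a : ℕ →₀ ℕ) (s : Multiset ℕ) : SymmFn :=
  partCoeff s • (s.map (uSym a)).prod

theorem count_succ_nsmul_partTerm_cons (a : ℕ →₀ ℕ) (k : ℕ) (s : Multiset ℕ) :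
    (s.count k + 1) • partTerm a (k ::ₘ s) = -(k : ℚ)⁻¹ • (uSym a k * partTerm a s) := by
  rw [← Nat.cast_smul_eq_nsmul ℚ, partTerm, smul_smul, natCast_count_succ_mul_partCoeff_cons,
    partTerm, Multiset.map_cons, Multiset.prod_cons, mul_smul_comm, smul_smul]

def wSeq (a : ℕ →₀ ℕ) (n : ℕ) : SymmFn := ∑ π : n.Partition, partTerm a π.parts

theorem wSeq_zero (a : ℕ →₀ ℕ) : wSeq a 0 = 1 := by
  simp [wSeq, partTerm, partCoeff]

theorem sum_count_nsmul_eq_sum_cons {M : Type*} [AddCommMonoid M] (Φ : Multiset ℕ → M)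
    {k n : ℕ} (hk : 1 ≤ k) (hkn : k ≤ n) :
    ∑ π : n.Partition, π.parts.count k • Φ π.parts =
      ∑ σ : (n - k).Partition, (σ.parts.count k + 1) • Φ (k ::ₘ σ.parts) := by
  classical
  calc ∑ π : n.Partition, π.parts.count k • Φ π.parts
      = ∑ π : n.Partition with k ∈ π.parts, π.parts.count k • Φ π.parts := by
        refine (sum_filter_of_ne fun (π : n.Partition) _ h => ?_).symm
        by_contra hk
        simp [Multiset.count_eq_zero_of_notMem hk] at h
    _ = ∑ π : {π : n.Partition // k ∈ π.parts}, π.1.parts.count k • Φ π.1.parts :=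
        sum_subtype _ (by simp) _
    _ = _ := (Fintype.sum_equiv (Nat.Partition.partitionWithPartEquiv hk hkn).symm _ _
        fun σ => by simp).symm

theorem nsmul_sum_count_nsmul_partTerm (a : ℕ →₀ ℕ) {k n : ℕ} (hkn : k ≤ n) :
    k • ∑ π : n.Partition, π.parts.count k • partTerm a π.parts =
      -(uSym a k * wSeq a (n - k)) := by
  rcases Nat.eq_zero_or_pos k with rfl | hk
  · simp [uSym_zero]
  rw [sum_count_nsmul_eq_sum_cons _ hk hkn]
  simp only [count_succ_nsmul_partTerm_cons]
  rw [← smul_sum, ← Nat.cast_smul_eq_nsmul ℚ, smul_smul, mul_neg,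
    mul_inv_cancel₀ (by positivity), neg_one_smul, wSeq, mul_sum]

def wSeries (a : ℕ →₀ ℕ) : SymmFn⟦X⟧ := mk (wSeq a)

def uSeries (a : ℕ →₀ ℕ) : SymmFn⟦X⟧ := mk (uSym a)

theorem X_mul_derivative_wSeries (a : ℕ →₀ ℕ) :
    X * d⁄dX SymmFn (wSeries a) = -uSeries a * wSeries a := by
  refine PowerSeries.ext fun n => ?_
  have hparts : ∀ π : n.Partition, ∑ k ∈ range (n + 1), k * π.parts.count k = n :=
    fun π => by
      conv_rhs => rw [← π.parts_sum, sum_multiset_count_of_subset _ _ fun k hk =>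
        mem_range_succ_iff.mpr (Nat.Partition.le_of_mem_parts (Multiset.mem_toFinset.mp hk))]
      simp only [smul_eq_mul, mul_comm]
  calc coeff n (X * d⁄dX SymmFn (wSeries a))
      = ∑ π : n.Partition, n • partTerm a π.parts := by
        rw [coeff_X_mul_derivative, wSeries, coeff_mk, ← nsmul_eq_mul, wSeq, smul_sum]
    _ = ∑ k ∈ range (n + 1),
          k • ∑ π : n.Partition, π.parts.count k • partTerm a π.parts := by
        simp only [smul_sum, smul_smul]
        rw [sum_comm]
        refine sum_congr rfl fun π _ => ?_
        rw [← sum_smul, hparts]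
    _ = ∑ k ∈ range (n + 1), -(uSym a k * wSeq a (n - k)) :=
        sum_congr rfl fun k hk => nsmul_sum_count_nsmul_partTerm a (mem_range_succ_iff.mp hk)
    _ = coeff n (-uSeries a * wSeries a) := by
        rw [neg_mul, map_neg, coeff_mul, Nat.sum_antidiagonal_eq_sum_range_succ_mk,
          sum_neg_distrib]
        simp only [uSeries, wSeries, coeff_mk]

theorem eSeries_eq_cSeries_mul_wSeries (a : ℕ →₀ ℕ) (ha0 : a 0 = 0) :
    eSeries = cSeries a * wSeries a := by
  refine eq_of_X_mul_derivative_eq X_mul_derivative_eSeries ?_ ?_ ?_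
  · have hsplit : pSeries = dSeries a + uSeries a :=
      PowerSeries.ext fun k => by simp [pSeries, dSeries, uSeries, uSym]
    rw [X_mul_derivative_mul (X_mul_derivative_cSeries a ha0) (X_mul_derivative_wSeries a),
      hsplit, neg_add]
  · simp [eSeries, ← coeff_zero_eq_constantCoeff_apply, eSym]
  · rw [map_mul, cSeries_eq_prod, map_prod, wSeries, ← coeff_zero_eq_constantCoeff_apply,
      coeff_mk, wSeq_zero, mul_one]
    refine prod_eq_one fun i hi => ?_
    rw [map_pow, map_sub, map_one, map_pow, constantCoeff_X,
      zero_pow (ne_zero_of_mem_support ha0 hi), sub_zero, one_pow]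

theorem sum_antidiagonal_eq_add_sum_Icc {M : Type*} [AddCommMonoid M] (f : ℕ → ℕ → M)
    (m : ℕ) : ∑ p ∈ antidiagonal m, f p.1 p.2 = f m 0 + ∑ n ∈ Icc 1 m, f (m - n) n := by
  rw [← Nat.sum_antidiagonal_swap, Nat.sum_antidiagonal_eq_sum_range_succ_mk, range_eq_Ico,
    sum_eq_sum_Ico_succ_bot (Nat.succ_pos m), zero_add, Nat.succ_eq_add_one,
    Ico_add_one_right_eq_Icc]
  rfl

theorem C_mul_wSeq (a : ℕ →₀ ℕ) (c : ℚ) (n : ℕ) :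
    MvPolynomial.C c * wSeq a n =
      ∑ π : n.Partition, (((-1 : ℚ) ^ n * c) * (sgnPart π / zPart π)) • uPart a π := by
  rw [← MvPolynomial.smul_eq_C_mul, wSeq, smul_sum]
  refine sum_congr rfl fun π _ => ?_
  rw [partTerm, partCoeff_parts, smul_smul, uPart]
  ring_nf

theorem uPart_mem_Uideal (a : ℕ →₀ ℕ) {n : ℕ} (hn : 0 < n) (π : n.Partition) :
    uPart a π ∈ Uideal a := by
  obtain ⟨k, hk⟩ := Multiset.exists_mem_of_ne_zero (s := π.parts) fun h =>
    hn.ne (by simpa [h] using π.parts_sum)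
  exact Ideal.mem_of_dvd _ (Multiset.dvd_prod (Multiset.mem_map_of_mem _ hk))
    (Ideal.subset_span ⟨k, π.parts_pos hk, rfl⟩)

theorem ESym_eq_sum_uPart_general (a : ℕ →₀ ℕ) (ha0 : a 0 = 0) (m : ℕ) :
    (ESym a m =
      - ∑ n ∈ Finset.Icc 1 m, ∑ π : n.Partition,
          (((-1 : ℚ) ^ n * cCoeff a (m - n)) * (sgnPart π / zPart π)) • uPart a π) ∧
    ESym a m ∈ Uideal a := by
  have hcoeff := congrArg (coeff m) (eSeries_eq_cSeries_mul_wSeries a ha0)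
  simp only [eSeries, cSeries, wSeries, coeff_mk, coeff_mul] at hcoeff
  rw [sum_antidiagonal_eq_add_sum_Icc (fun i j => MvPolynomial.C (cCoeff a i) * wSeq a j),
    wSeq_zero, mul_one] at hcoeff
  have hE : ESym a m = -∑ n ∈ Icc 1 m, MvPolynomial.C (cCoeff a (m - n)) * wSeq a n := by
    rw [ESym, neg_smul, hcoeff]
    abel
  simp_rw [C_mul_wSeq] at hE
  exact ⟨hE, hE ▸ neg_mem (sum_mem fun n hn => sum_mem fun π _ =>
    Submodule.smul_of_tower_mem _ _ (uPart_mem_Uideal a (mem_Icc.mp hn).1 π))⟩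

/-- For every `m ≥ 1`,
`E_m = − ∑_{n=1}^{m} (−1)^n c_{m−n} ∑_{λ ⊢ n} sgn(λ)·u_λ/z_λ` in `Λ`; in particular
`E_m` lies in the ideal generated by the `uₙ`, `n ≥ 1`. -/
theorem ESym_eq_sum_uPart (a : ℕ →₀ ℕ) (ha0 : a 0 = 0) (m : ℕ) (hm : 1 ≤ m) :
    (ESym a m =
      - ∑ n ∈ Finset.Icc 1 m, ∑ π : n.Partition,
          (((-1 : ℚ) ^ n * cCoeff a (m - n)) * (sgnPart π / zPart π)) • uPart a π) ∧
    ESym a m ∈ Uideal a :=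
  ESym_eq_sum_uPart_general a ha0 m

end
end

section
/- Let n ≥ 1 and let q be an equivalence relation (setoid) on Fin n, regarded as an element of the lattice of equivalence relations on Fin n ordered by refinement (r ≤ s iff r-equivalence implies s-equivalence; the bottom element ⊥ is equality). Then the Möbius function of this finite lattice satisfies μ(⊥, q) = ∏_{c} (−1)^{|c|−1} (|c|−1)!, the product ranging over the equivalence classes c of q, where |c| denotes the cardinality of c. Equivalently, in the paper's dual convention with the discrete partition as top element 1̂, μ(p, 1̂) = ∏_{b block of p} (−1)^{|b|−1}(|b|−1)!, so the unsigned Möbius number is ∏_b (|b|−1)!. -/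
open scoped Classical

/-- The Möbius function of a finite partial order: `μ(x,x) = 1` and
`∑_{x ≤ z ≤ y} μ(x,z) = 0` for `x < y` (with `μ(x,y) = 0` when `x ≰ y`). -/
noncomputable def orderMoebius {α : Type*} [PartialOrder α] [Finite α] (x : α) : α → ℤ
  | y =>
    if x = y then 1
    else - ∑ᶠ z : {z : α // x ≤ z ∧ z < y}, orderMoebius x z.1
  termination_by y => Nat.card {w : α // w < y}
  decreasing_by
    rename_i z
    have hz : (z : α) < y := z.2.2
    have h3 : {w : α | w < (z : α)} ⊂ {w : α | w < y} :=
      ⟨fun w hw => lt_trans hw hz, fun h => lt_irrefl _ (h hz)⟩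
    exact Set.ncard_lt_ncard h3 (Set.toFinite _)

instance {α : Type*} [Finite α] : Finite (Setoid α) :=
  Finite.of_injective (fun s : Setoid α => s.r) fun s t h => by
    cases s; cases t; simp only at h; subst h; rfl

/-!
For a partition `q` let `g q = ∑ sign σ`, summed over the permutations `σ` whose cycles are
exactly the blocks of `q`. Grouping permutations by their cycle partition, `∑_{p ≤ q} g p` is the
sum of `sign` over the group of permutations preserving every block of `q`; unless `q = ⊥` this
group contains a transposition, so `sign` is a nontrivial character of it and the sum vanishes.
Hence `g` satisfies the recursion defining `μ(⊥, ·)`. On the other hand, a permutation with cycle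
partition `q` is the same as a full cycle on each block, and a block of size `k` carries
`(k - 1)!` full cycles, each of sign `(-1)^(k - 1)`.
-/

open Equiv Equiv.Perm Finset
open scoped Nat

theorem orderMoebius_eq_of_sum_eq {α : Type*} [PartialOrder α] [Fintype α] {x : α} {g : α → ℤ}
    (hg : ∀ y, x ≤ y → ∑ z with x ≤ z ∧ z ≤ y, g z = if x = y then 1 else 0) {y : α}
    (hy : x ≤ y) : orderMoebius x y = g y := by
  induction y using WellFoundedLT.induction with
  | ind y ih =>
  rw [orderMoebius]
  split_ifs with hxy
  · subst hxy
    have hsingle : ({z | x ≤ z ∧ z ≤ x} : Finset α) = {x} := by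
      ext
      simp [le_antisymm_iff, and_comm]
    simpa [hsingle] using (hg x le_rfl).symm
  · have hsplit : ∑ z with x ≤ z ∧ z ≤ y, g z = g y + ∑ z with x ≤ z ∧ z < y, g z := by
      rw [← Finset.sum_insert (by simp)]
      congr 1
      ext z
      simp only [mem_filter, mem_univ, true_and, mem_insert]
      grind [le_iff_lt_or_eq]
    have hlower : ∑ᶠ z : {z : α // x ≤ z ∧ z < y}, orderMoebius x z.1 =
        ∑ z with x ≤ z ∧ z < y, g z := by
      rw [finsum_eq_sum_of_fintype, ← Finset.sum_subtype _ mem_filter_univ]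
      refine Finset.sum_congr rfl fun z hz => ?_
      rw [mem_filter] at hz
      exact ih z hz.2.2 hz.2.1
    have hy_sum := hg y hy
    rw [if_neg hxy, hsplit] at hy_sum
    rw [hlower]
    linarith

section Fiberwise

variable {α ι : Type*} (f : α → ι)

def fiberwisePerm : (∀ i, Perm {a // f a = i}) →* Perm α :=
  (sigmaFiberEquiv f).permCongrHom.toMonoidHom.comp (sigmaCongrRightHom _)

theorem fiberwisePerm_apply (F : ∀ i, Perm {a // f a = i}) (a : α) :
    fiberwisePerm f F a = F (f a) ⟨a, rfl⟩ :=
  rfl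

theorem fiberwisePerm_injective : Function.Injective (fiberwisePerm f) := fun F G h => by
  ext i ⟨a, rfl⟩
  exact DFunLike.congr_fun h a

theorem exists_fiberwisePerm_eq_iff (σ : Perm α) :
    (∃ F, fiberwisePerm f F = σ) ↔ ∀ a, f (σ a) = f a := by
  constructor
  · rintro ⟨F, rfl⟩ a
    exact (F (f a) ⟨a, rfl⟩).2
  · intro h
    exact ⟨fun i => σ.subtypePerm fun a => by rw [h a], rfl⟩

theorem sameCycle_fiberwisePerm_iff (F : ∀ i, Perm {a // f a = i}) {a b : α} :
    (fiberwisePerm f F).SameCycle a b ↔ ∃ h : f b = f a, (F (f a)).SameCycle ⟨a, rfl⟩ ⟨b, h⟩ := by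
  simp only [SameCycle, ← map_zpow, fiberwisePerm_apply, Pi.pow_apply]
  constructor
  · rintro ⟨k, rfl⟩
    exact ⟨((F (f a) ^ k) ⟨a, rfl⟩).2, k, rfl⟩
  · rintro ⟨h, k, hk⟩
    exact ⟨k, congrArg Subtype.val hk⟩

theorem fiberwisePerm_mulSingle [DecidableEq ι] (i : ι) (τ : Perm {a // f a = i}) :
    fiberwisePerm f (Pi.mulSingle i τ) = ofSubtype τ := by
  ext a
  by_cases ha : f a = i
  · subst ha
    rw [fiberwisePerm_apply, Pi.mulSingle_eq_same]
    exact (ofSubtype_apply_of_mem τ rfl).symm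
  · rw [fiberwisePerm_apply, Pi.mulSingle_eq_of_ne ha]
    exact (ofSubtype_apply_of_not_mem τ ha).symm

theorem sameCycle_setoid_le_iff (q : Setoid α) (σ : Perm α) :
    SameCycle.setoid σ ≤ q ↔ ∀ a, Quotient.mk q (σ a) = Quotient.mk q a := by
  constructor
  · intro h a
    exact Quotient.sound (q.symm (h ⟨1, rfl⟩))
  · intro h a b hab
    obtain ⟨F, rfl⟩ := (exists_fiberwisePerm_eq_iff _ σ).2 h
    obtain ⟨hba, -⟩ := (sameCycle_fiberwisePerm_iff _ F).1 hab
    exact q.symm (Quotient.exact hba)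

theorem sameCycle_setoid_fiberwisePerm_eq_iff (q : Setoid α)
    (F : ∀ c : Quotient q, Perm {a // Quotient.mk q a = c}) :
    SameCycle.setoid (fiberwisePerm (Quotient.mk q) F) = q ↔ ∀ c, SameCycle.setoid (F c) = ⊤ := by
  refine Setoid.ext_iff.trans ?_
  simp only [Setoid.eq_top_iff]
  constructor
  · rintro h c ⟨a, rfl⟩ ⟨b, hb⟩
    exact ((sameCycle_fiberwisePerm_iff _ F).1 ((h a b).2 (q.symm (Quotient.exact hb)))).2
  · intro h a b
    exact (sameCycle_fiberwisePerm_iff _ F).trans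
      ⟨fun ⟨hba, _⟩ => q.symm (Quotient.exact hba),
        fun hab => ⟨Quotient.sound (q.symm hab), h _ _ _⟩⟩

variable [Fintype α] [DecidableEq α] [Fintype ι] [DecidableEq ι]

theorem sign_fiberwisePerm (F : ∀ i, Perm {a // f a = i}) :
    sign (fiberwisePerm f F) = ∏ i, sign (F i) := by
  let signProd : (∀ i, Perm {a // f a = i}) →* ℤˣ := ∏ i, sign.comp (Pi.evalMonoidHom _ i)
  suffices sign.comp (fiberwisePerm f) = signProd by
    simpa [signProd, MonoidHom.finsetProd_apply] using DFunLike.congr_fun this F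
  refine MonoidHom.pi_ext fun i τ => ?_
  simp only [MonoidHom.comp_apply, fiberwisePerm_mulSingle, sign_ofSubtype, signProd,
    MonoidHom.finsetProd_apply, Pi.evalMonoidHom_apply]
  rw [Fintype.prod_eq_single i fun j hj => by rw [Pi.mulSingle_eq_of_ne hj, map_one],
    Pi.mulSingle_eq_same]

theorem sum_fiberwisePerm {M : Type*} [AddCommMonoid M] (g : Perm α → M) :
    ∑ F, g (fiberwisePerm f F) = ∑ σ with ∀ a, f (σ a) = f a, g σ := by
  rw [← Finset.sum_image fun F _ G _ h => fiberwisePerm_injective f h]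
  congr 1
  ext σ
  simp [exists_fiberwisePerm_eq_iff]

end Fiberwise

section FullCycles

variable {β : Type*} [Fintype β] [DecidableEq β]

theorem sameCycle_setoid_eq_top_iff_cycleType_eq [Nontrivial β] (τ : Perm β) :
    SameCycle.setoid τ = ⊤ ↔ τ.cycleType = {Fintype.card β} := by
  rw [Setoid.eq_top_iff]
  constructor
  · intro h
    have hmoved : ∀ x, τ x ≠ x := fun x hx => by
      obtain ⟨y, hy⟩ := exists_ne x
      exact hy ((h x y).eq_of_left hx).symm
    have hsupp : τ.support = univ := eq_univ_of_forall fun x => mem_support.2 (hmoved x)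
    obtain ⟨x⟩ := ‹Nontrivial β›.to_nonempty
    have hcycle : τ.IsCycle :=
      (isCycle_iff_sameCycle (hmoved x)).2 fun {y} => ⟨fun _ => hmoved y, fun _ => h x y⟩
    rw [hcycle.cycleType, hsupp, card_univ]
  · intro h x y
    have hcycle : τ.IsCycle := card_cycleType_eq_one.1 (by simp [h])
    have hsupp : τ.support = univ :=
      eq_univ_of_card _ (by rw [← sum_cycleType, h, Multiset.sum_singleton])
    exact hcycle.sameCycle (mem_support.1 (hsupp ▸ mem_univ x)) (mem_support.1 (hsupp ▸ mem_univ y))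

theorem sum_sign_of_sameCycle_setoid_eq_top [Nonempty β] :
    ∑ τ : Perm β with SameCycle.setoid τ = ⊤, (sign τ : ℤ) =
      (-1) ^ (Fintype.card β - 1) * (Fintype.card β - 1)! := by
  rcases subsingleton_or_nontrivial β with hβ | hβ
  · have hcard : Fintype.card β = 1 :=
      le_antisymm (Fintype.card_le_one_iff_subsingleton.2 hβ) Fintype.card_pos
    have hall : ∀ τ : Perm β, SameCycle.setoid τ = ⊤ :=
      fun τ => Setoid.eq_top_iff.2 fun x y => Subsingleton.elim x y ▸ SameCycle.refl τ x
    simp [hall, hcard]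
  · obtain ⟨m, hm⟩ : ∃ m, Fintype.card β = m + 2 :=
      Nat.exists_eq_add_of_le' Fintype.one_lt_card
    rw [Finset.filter_congr fun τ _ => sameCycle_setoid_eq_top_iff_cycleType_eq τ,
      Finset.sum_congr rfl fun τ hτ => by rw [sign_of_cycleType, (mem_filter.1 hτ).2],
      sum_const, card_of_cycleType_singleton Fintype.one_lt_card le_rfl, Nat.choose_self, hm]
    simp only [mul_one, Multiset.sum_singleton, Multiset.card_singleton,
      nsmul_eq_mul, Units.val_pow_eq_pow_val, Units.val_neg, Units.val_one]
    push_cast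
    ring

end FullCycles

section SignedCount

variable {α : Type*} [Fintype α] [DecidableEq α]

theorem sum_sign_of_sameCycle_setoid_eq (q : Setoid α) :
    ∑ σ : Perm α with SameCycle.setoid σ = q, (sign σ : ℤ) =
      ∏ c : Quotient q, (-1) ^ (Fintype.card {a // Quotient.mk q a = c} - 1) *
        ((Fintype.card {a // Quotient.mk q a = c} - 1)! : ℤ) := by
  have hblock (c : Quotient q) : Nonempty {a // Quotient.mk q a = c} :=
    c.inductionOn fun a => ⟨⟨a, rfl⟩⟩
  calc ∑ σ : Perm α with SameCycle.setoid σ = q, (sign σ : ℤ)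
      = ∑ σ : Perm α with ∀ a, Quotient.mk q (σ a) = Quotient.mk q a,
          if SameCycle.setoid σ = q then (sign σ : ℤ) else 0 := by
        rw [sum_filter, sum_filter]
        refine sum_congr rfl fun σ _ => ?_
        by_cases hσ : SameCycle.setoid σ = q
        · simp [hσ, ← sameCycle_setoid_le_iff]
        · simp [hσ]
    _ = ∑ F : ∀ c, Perm {a // Quotient.mk q a = c},
          if SameCycle.setoid (fiberwisePerm _ F) = q then (sign (fiberwisePerm _ F) : ℤ)
          else 0 :=
        (sum_fiberwisePerm _ fun σ => if SameCycle.setoid σ = q then (sign σ : ℤ) else 0).symm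
    _ = ∑ F : ∀ c, Perm {a // Quotient.mk q a = c},
          ∏ c, if SameCycle.setoid (F c) = ⊤ then (sign (F c) : ℤ) else 0 := by
        simp only [sameCycle_setoid_fiberwisePerm_eq_iff, sign_fiberwisePerm, prod_ite_zero,
          mem_univ, true_imp_iff, Units.coe_prod]
    _ = ∏ c, ∑ τ : Perm {a // Quotient.mk q a = c},
          if SameCycle.setoid τ = ⊤ then (sign τ : ℤ) else 0 :=
        (Fintype.prod_sum fun c (τ : Perm {a // Quotient.mk q a = c}) =>
          if SameCycle.setoid τ = ⊤ then (sign τ : ℤ) else 0).symm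
    _ = _ := by simp only [← sum_filter, sum_sign_of_sameCycle_setoid_eq_top]

theorem sum_sign_of_sameCycle_setoid_le (q : Setoid α) :
    ∑ σ : Perm α with SameCycle.setoid σ ≤ q, (sign σ : ℤ) = if q = ⊥ then 1 else 0 := by
  split_ifs with hq
  · subst hq
    have hbot (σ : Perm α) : SameCycle.setoid σ ≤ ⊥ ↔ σ = 1 := by
      refine ⟨fun h => Perm.ext fun a => (h (⟨1, rfl⟩ : σ.SameCycle a (σ a))).symm, ?_⟩
      rintro rfl a b hab
      exact sameCycle_one.1 hab
    simp [hbot, filter_eq']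
  · obtain ⟨a, b, hab, hne⟩ : ∃ a b, q a b ∧ a ≠ b := by
      by_contra! h
      exact hq (Setoid.ext fun a b => ⟨h a b, fun hab => hab ▸ q.refl a⟩)
    let χ := (Units.coeHom ℤ).comp (sign.comp (fiberwisePerm (Quotient.mk q)))
    have hχ : χ ≠ 1 := by
      intro h
      have hb : Quotient.mk q b = Quotient.mk q a := Quotient.sound (q.symm hab)
      have := DFunLike.congr_fun h (Pi.mulSingle (Quotient.mk q a) (swap ⟨a, rfl⟩ ⟨b, hb⟩) :
        ∀ c, Perm {x // Quotient.mk q x = c})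
      simp [χ, fiberwisePerm_mulSingle, hne] at this
    simp only [sameCycle_setoid_le_iff]
    rw [← sum_fiberwisePerm]
    exact sum_hom_units_eq_zero χ hχ

end SignedCount

/-- In the lattice of equivalence relations on `Fin n` ordered by
refinement (with bottom element `⊥` the equality relation), the Möbius function satisfies
`μ(⊥, q) = ∏_c (−1)^{|c|−1} (|c|−1)!`, the product over the equivalence classes `c` of
`q`. -/
theorem moebius_partition_lattice (n : ℕ) (q : Setoid (Fin n)) :
    orderMoebius (⊥ : Setoid (Fin n)) q =
      ∏ᶠ c : Quotient q,
        (-1 : ℤ) ^ (Nat.card {y : Fin n // Quotient.mk q y = c} - 1) *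
          (Nat.factorial (Nat.card {y : Fin n // Quotient.mk q y = c} - 1) : ℤ) := by
  have := Fintype.ofFinite (Setoid (Fin n))
  have hsum (p : Setoid (Fin n)) (_ : ⊥ ≤ p) :
      ∑ z with ⊥ ≤ z ∧ z ≤ p, ∑ σ : Perm (Fin n) with SameCycle.setoid σ = z, (sign σ : ℤ) =
        if ⊥ = p then 1 else 0 := by
    simp only [bot_le, true_and, eq_comm (a := ⊥)]
    refine (sum_fiberwise_eq_sum_filter univ _ SameCycle.setoid fun σ => (sign σ : ℤ)).trans ?_
    simp only [mem_filter_univ]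
    exact sum_sign_of_sameCycle_setoid_le p
  rw [orderMoebius_eq_of_sum_eq hsum bot_le, sum_sign_of_sameCycle_setoid_eq,
    finprod_eq_prod_of_fintype]
  simp only [Nat.card_eq_fintype_card]
end

section
/- Let n ≥ 1. In the polynomial ring ℤ[t], ∑_{q} μ(⊥, q) · t^{n − b(q)} = ∏_{j=1}^{n−1} (1 − j·t), where the sum is over all equivalence relations q on Fin n, b(q) is the number of equivalence classes of q, ⊥ is the equality relation, and μ is the Möbius function of the lattice of equivalence relations on Fin n ordered by refinement. (This is the Whitney polynomial of the partition lattice P(n): W_{P(n)}(t) = ∑_{p ∈ P(n)} μ(p, 1̂) t^{r(p)} = ∏_{j=1}^{n−1}(1 − jt), where in the paper's convention the discrete partition is the top element 1̂ and r(p) = n − (number of blocks of p).) -/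
/-! Count maps `α → β` by their kernel. The maps whose kernel contains `q` are the maps out
of `α ⧸ q`, so there are `m ^ b(q)` of them for `m = |β|`; Möbius inversion at `⊥` then gives
`∑_q μ(⊥, q) m ^ b(q) = m (m - 1) ⋯ (m - n + 1)`, the number of injective maps. As this holds
for every `m`, `∑_q μ(⊥, q) t ^ b(q)` is the falling factorial `t (t - 1) ⋯ (t - n + 1)`,
and the Whitney polynomial is its reversal `∏_{j < n} (1 - j t)`. -/

open scoped Classical

open Finset Polynomial

noncomputable local instance {α : Type*} [Finite α] : Fintype (Setoid α) := Fintype.ofFinite _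

noncomputable local instance {α : Type*} [Finite α] : LocallyFiniteOrder (Setoid α) :=
  Fintype.toLocallyFiniteOrder

theorem orderMoebius_eq_mu {α : Type*} [PartialOrder α] [Finite α] [LocallyFiniteOrder α]
    [DecidableEq α] (x y : α) : orderMoebius x y = IncidenceAlgebra.mu ℤ x y := by
  have := Fintype.ofFinite α
  induction y using WellFoundedLT.induction with
  | ind y ih =>
    rw [orderMoebius, IncidenceAlgebra.mu_apply]
    split_ifs
    · rfl
    · rw [finsum_eq_sum_of_fintype, Finset.sum_subtype (Ico x y) (fun _ => mem_Ico)]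
      exact congrArg Neg.neg (sum_congr rfl fun z _ => ih z z.2.2)

section KernelCount

variable {α β : Type*}

theorem Setoid.natCard_le_ker [Finite α] (q : Setoid α) :
    Nat.card {f : α → β // q ≤ Setoid.ker f} = Nat.card β ^ Nat.card (Quotient q) := by
  rw [Nat.card_congr (Setoid.liftEquiv q), Nat.card_fun]

theorem Setoid.natCard_ker_eq_bot [Finite α] [Finite β] :
    Nat.card {f : α → β // Setoid.ker f = ⊥} = (Nat.card β).descFactorial (Nat.card α) := by
  have := Fintype.ofFinite α
  have := Fintype.ofFinite β
  rw [Nat.card_congr ((Equiv.subtypeEquivRight fun f => (Setoid.injective_iff_ker_bot f).symm).trans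
    (Equiv.subtypeInjectiveEquivEmbedding α β)), Nat.card_eq_fintype_card,
    Fintype.card_embedding_eq, Nat.card_eq_fintype_card, Nat.card_eq_fintype_card]

theorem Setoid.sum_Ici_natCard_ker_eq [Finite α] [Finite β] (q : Setoid α) :
    ∑ p ∈ Ici q, (Nat.card {f : α → β // Setoid.ker f = p} : ℤ) =
      Nat.card {f : α → β // q ≤ Setoid.ker f} := by
  have := Fintype.ofFinite α
  have := Fintype.ofFinite β
  simp only [Nat.card_eq_fintype_card, Fintype.card_subtype]
  rw [card_eq_sum_card_fiberwise (f := Setoid.ker) (t := Ici q)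
    fun f hf => by simpa using hf]
  push_cast
  refine sum_congr rfl fun p hp => ?_
  congr 2
  ext f
  simp only [mem_filter, mem_univ, true_and]
  exact ⟨fun h => ⟨h ▸ mem_Ici.1 hp, h⟩, And.right⟩

theorem sum_orderMoebius_bot_mul_pow_natCard_quotient [Finite α] [Finite β] :
    ∑ p : Setoid α, orderMoebius ⊥ p * (Nat.card β : ℤ) ^ Nat.card (Quotient p) =
      (Nat.card β).descFactorial (Nat.card α) := by
  have := IncidenceAlgebra.moebius_inversion_top (𝕜 := ℤ)
    (fun p => (Nat.card {f : α → β // Setoid.ker f = p} : ℤ))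
    (fun q => Nat.card {f : α → β // q ≤ Setoid.ker f})
    (fun q => (Setoid.sum_Ici_natCard_ker_eq q).symm) ⊥
  simp only [Setoid.natCard_ker_eq_bot, Setoid.natCard_le_ker, Ici_bot, orderMoebius_eq_mu]
    at this ⊢
  exact_mod_cast this.symm

end KernelCount

theorem sum_C_orderMoebius_bot_mul_X_pow_natCard_quotient (α : Type*) [Finite α] :
    ∑ p : Setoid α, C (orderMoebius ⊥ p) * X ^ Nat.card (Quotient p) =
      descPochhammer ℤ (Nat.card α) := by
  refine eq_of_infinite_eval_eq _ _ ((Set.infinite_range_of_injective Nat.cast_injective).mono ?_)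
  rintro _ ⟨m, rfl⟩
  simp only [Set.mem_ofPred_eq, eval_finsetSum, eval_mul, eval_C, eval_pow, eval_X,
    descPochhammer_eval_eq_descFactorial]
  simpa using sum_orderMoebius_bot_mul_pow_natCard_quotient (α := α) (β := Fin m)

theorem reverse_X_sub_C {R : Type*} [Ring R] (a : R) : (X - C a).reverse = 1 - C a * X := by
  nontriviality R
  rw [reverse, natDegree_X_sub_C, reflect_sub, reflect_C, reflect_one_X, pow_one]

theorem reverse_descPochhammer {R : Type*} [CommRing R] [NoZeroDivisors R] (n : ℕ) :
    (descPochhammer R n).reverse = ∏ j ∈ range n, (1 - C (j : R) * X) := by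
  induction n with
  | zero => simpa using reverse_C (1 : R)
  | succ n ih =>
    rw [descPochhammer_succ_right, reverse_mul_of_domain, ih, prod_range_succ, ← C_eq_natCast,
      reverse_X_sub_C]

theorem reflect_sum_C_mul_X_pow {R ι : Type*} [Semiring R] (s : Finset ι) (a : ι → R)
    (e : ι → ℕ) {N : ℕ} (he : ∀ i ∈ s, e i ≤ N) :
    reflect N (∑ i ∈ s, C (a i) * X ^ e i) = ∑ i ∈ s, C (a i) * X ^ (N - e i) := by
  let reflectHom : R[X] →+ R[X] :=
    { toFun := reflect N, map_zero' := reflect_zero, map_add' := fun f g => reflect_add f g N }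
  rw [show reflect N = reflectHom from rfl, map_sum]
  exact sum_congr rfl fun i hi => by
    rw [← revAt_le (he i hi)]
    exact reflect_C_mul_X_pow N (e i)

theorem whitney_polynomial_partition_lattice_general (n : ℕ) :
    ∑ᶠ q : Setoid (Fin n),
        Polynomial.C (orderMoebius (⊥ : Setoid (Fin n)) q) *
          Polynomial.X ^ (n - Nat.card (Quotient q)) =
      ∏ j ∈ Finset.Icc 1 (n - 1), (1 - Polynomial.C (j : ℤ) * Polynomial.X) := by
  have card_quotient_le (q : Setoid (Fin n)) : Nat.card (Quotient q) ≤ n := by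
    simpa using Nat.card_le_card_of_surjective _ (Quotient.mk_surjective (s := q))
  rw [finsum_eq_sum_of_fintype, ← reflect_sum_C_mul_X_pow _ _ _ fun q _ => card_quotient_le q,
    sum_C_orderMoebius_bot_mul_X_pow_natCard_quotient, Nat.card_fin]
  have reflect_eq_reverse : reflect n (descPochhammer ℤ n) = (descPochhammer ℤ n).reverse := by
    rw [reverse, descPochhammer_natDegree]
  rw [reflect_eq_reverse, reverse_descPochhammer]
  refine (prod_subset (fun j hj => ?_) fun j hj hj' => ?_).symm
  · simp only [mem_Icc, mem_range] at hj ⊢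
    omega
  · obtain rfl : j = 0 := by
      simp only [mem_Icc, mem_range] at hj hj'
      omega
    simp

/-- Whitney polynomial of the partition lattice: in `ℤ[t]`,
`∑_q μ(⊥, q) t^{n − b(q)} = ∏_{j=1}^{n−1} (1 − j·t)`, the sum over all equivalence
relations `q` on `Fin n`, where `b(q)` is the number of classes of `q`. -/
theorem whitney_polynomial_partition_lattice (n : ℕ) (hn : 1 ≤ n) :
    ∑ᶠ q : Setoid (Fin n),
        Polynomial.C (orderMoebius (⊥ : Setoid (Fin n)) q) *
          Polynomial.X ^ (n - Nat.card (Quotient q)) =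
      ∏ j ∈ Finset.Icc 1 (n - 1), (1 - Polynomial.C (j : ℤ) * Polynomial.X) :=
  whitney_polynomial_partition_lattice_general n
end
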